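/- arXiv:1407.6584 — 5 statements merged into one kernel-verified Lean document; each statement's English description precedes it below -/
import Mathlib

section
/- For all integers 1 ≤ l ≤ n, with b(n,l) := e^{−n} Σ_{p=0}^∞ (n^p/p!) · C(min(n,p), l) / C(n, l) (where C(a,b) denotes the binomial coefficient) and with the falling factorial n_{[l]} := n(n−1)···(n−l+1), the following exact identity holds: 1 − b(n,l) = e^{−n} Σ_{p=n−l+1}^{n} n^p/p! + (1 − n^l/n_{[l]}) · e^{−n} Σ_{p=0}^{n−l} n^p/p!. -/
/-!
With `f p = x ^ p / p!` (and `x = n` in the end), the weight `C(min n p, l) / C(n, l)` equals `1` for `p ≥ n`, so the tail of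
the series is the tail of `∑ f p = e ^ x`. For `p ≤ n` the identity `f p * C(p, l) = x ^ l / l! * f (p - l)`
turns the head into `x ^ l / n_[l] * ∑_{q ≤ n - l} f q`, since `n_[l] = l! * C(n, l)`.
-/

open Finset Nat

theorem pow_add_div_factorial_mul_choose {K : Type*} [Field K] [CharZero K] (x : K) (l q : ℕ) :
    x ^ (l + q) / (l + q)! * (l + q).choose l = x ^ l / l ! * (x ^ q / q !) := by
  have h : ((l + q).choose l * l ! * q ! : K) = (l + q)! := by
    exact_mod_cast add_tsub_cancel_left l q ▸ choose_mul_factorial_mul_factorial (le_add_right l q)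
  have hchoose : ((l + q).choose l : K) ≠ 0 := by exact_mod_cast (choose_pos (le_add_right l q)).ne'
  rw [← h, pow_add]
  field_simp

theorem sum_range_add_pow_div_factorial_mul_choose {K : Type*} [Field K] [CharZero K] (x : K)
    (l m : ℕ) :
    ∑ p ∈ range (l + m), x ^ p / p ! * p.choose l = x ^ l / l ! * ∑ q ∈ range m, x ^ q / q ! := by
  rw [sum_range_add, sum_eq_zero fun p hp ↦ by simp [choose_eq_zero_of_lt (mem_range.1 hp)],
    zero_add, mul_sum]
  exact sum_congr rfl fun q _ ↦ pow_add_div_factorial_mul_choose x l q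

theorem sum_range_pow_div_factorial_mul_choose_min_div_choose (x : ℝ) {n l : ℕ} (hln : l ≤ n) :
    ∑ p ∈ range (n + 1), x ^ p / p ! * ((min n p).choose l / n.choose l : ℝ)
      = x ^ l / n.descFactorial l * ∑ p ∈ range (n - l + 1), x ^ p / p ! := by
  have hchoose : (n.choose l : ℝ) ≠ 0 := by exact_mod_cast (choose_pos hln).ne'
  have hdesc : (n.descFactorial l : ℝ) = l ! * n.choose l := by
    exact_mod_cast descFactorial_eq_factorial_mul_choose n l
  calc ∑ p ∈ range (n + 1), x ^ p / p ! * ((min n p).choose l / n.choose l : ℝ)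
      = (∑ p ∈ range (l + (n - l + 1)), x ^ p / p ! * p.choose l) / n.choose l := by
        rw [show l + (n - l + 1) = n + 1 by omega, sum_div]
        refine sum_congr rfl fun p hp ↦ ?_
        rw [min_eq_right (Nat.lt_succ_iff.1 (mem_range.1 hp)), mul_div_assoc]
    _ = x ^ l / n.descFactorial l * ∑ p ∈ range (n - l + 1), x ^ p / p ! := by
        rw [sum_range_add_pow_div_factorial_mul_choose, hdesc]
        field_simp

theorem tsum_pow_div_factorial_mul_choose_min_div_choose (x : ℝ) {n l : ℕ} (hln : l ≤ n) :
    ∑' p : ℕ, x ^ p / p ! * ((min n p).choose l / n.choose l : ℝ)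
      = Real.exp x - ∑ p ∈ range (n + 1), x ^ p / p !
        + x ^ l / n.descFactorial l * ∑ p ∈ range (n - l + 1), x ^ p / p ! := by
  have hchoose : (n.choose l : ℝ) ≠ 0 := by exact_mod_cast (choose_pos hln).ne'
  have htail : ∀ i, x ^ (i + (n + 1)) / (i + (n + 1))! *
      ((min n (i + (n + 1))).choose l / n.choose l : ℝ) = x ^ (i + (n + 1)) / (i + (n + 1))! := by
    intro i
    rw [min_eq_left (by omega), div_self hchoose, mul_one]
  have hf := Real.summable_pow_div_factorial x
  have hexp : ∑' p : ℕ, x ^ p / p ! = Real.exp x := by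
    rw [Real.exp_eq_exp_ℝ, NormedSpace.exp_eq_tsum_div]
  rw [← Summable.sum_add_tsum_nat_add' (k := n + 1)
      (by simpa only [htail] using (summable_nat_add_iff (n + 1)).2 hf),
    sum_range_pow_div_factorial_mul_choose_min_div_choose x hln, ← hexp,
    ← hf.sum_add_tsum_nat_add (n + 1)]
  simp only [htail]
  ring

theorem one_sub_b_eq_general (n l : ℕ) (hln : l ≤ n) :
    1 - Real.exp (-n) * ∑' p : ℕ, (n : ℝ) ^ p / p.factorial *
        ((Nat.choose (min n p) l : ℝ) / (Nat.choose n l : ℝ))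
    = Real.exp (-n) * ∑ p ∈ Finset.Icc (n - l + 1) n, (n : ℝ) ^ p / p.factorial
      + (1 - (n : ℝ) ^ l / (Nat.descFactorial n l : ℝ)) *
        (Real.exp (-n) * ∑ p ∈ Finset.range (n - l + 1), (n : ℝ) ^ p / p.factorial) := by
  have hexp : Real.exp (-n) * Real.exp n = 1 := by rw [← Real.exp_add, neg_add_cancel, Real.exp_zero]
  rw [tsum_pow_div_factorial_mul_choose_min_div_choose _ hln, ← Ico_add_one_right_eq_Icc,
    sum_Ico_eq_sub _ (by omega)]
  linear_combination -hexp

/-- **Exact de-Poissonization identity.** For integers `1 ≤ l ≤ n`, with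
`b(n,l) = e^{-n} ∑_{p} (n^p/p!) C(min(n,p),l)/C(n,l)` and the falling factorial
`n_[l] = n (n-1) ⋯ (n-l+1)`, one has
`1 - b(n,l) = e^{-n} ∑_{p=n-l+1}^n n^p/p! + (1 - n^l/n_[l]) e^{-n} ∑_{p=0}^{n-l} n^p/p!`. -/
theorem one_sub_b_eq (n l : ℕ) (hl : 1 ≤ l) (hln : l ≤ n) :
    1 - Real.exp (-n) * ∑' p : ℕ, (n : ℝ) ^ p / p.factorial *
        ((Nat.choose (min n p) l : ℝ) / (Nat.choose n l : ℝ))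
    = Real.exp (-n) * ∑ p ∈ Finset.Icc (n - l + 1) n, (n : ℝ) ^ p / p.factorial
      + (1 - (n : ℝ) ^ l / (Nat.descFactorial n l : ℝ)) *
        (Real.exp (-n) * ∑ p ∈ Finset.range (n - l + 1), (n : ℝ) ^ p / p.factorial) :=
  one_sub_b_eq_general n l hln
end

section
/- Fix an integer l ≥ 1 and for n ≥ l set b(n,l) := e^{−n} Σ_{p=0}^∞ (n^p/p!) · C(min(n,p), l) / C(n, l), where C(a,b) denotes the binomial coefficient. Then 1 − b(n,l) = O(n^{−1/2}) as n → ∞; that is, there exist C > 0 and n_0 ≥ l such that |1 − b(n,l)| ≤ C n^{−1/2} for all n ≥ n_0. -/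
/-!
Since `C(min(n,p), l) = C(n,l)` for `p ≥ n`, the defect `1 - b(n,l)` is a finite sum: the
Poisson(`n`) weights `e^{-n} n^p/p!` of `p < n` against `1 - C(p,l)/C(n,l)`. By Pascal's rule this
is at most `l (n - p)/n`, and the weights `(n - p) n^p/p!` telescope to `n · n^n/n!`, so
`0 ≤ 1 - b(n,l) ≤ l e^{-n} n^n/n!`, which Stirling's lower bound `n! ≥ √(2πn) (n/e)^n` turns
into `l/√n`.
-/

open Finset Real

theorem Nat.choose_succ_le_choose_add_sub_mul {p n : ℕ} (l : ℕ) (hp : p ≤ n) :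
    n.choose (l + 1) ≤ p.choose (l + 1) + (n - p) * (n - 1).choose l := by
  induction n, hp using Nat.le_induction with
  | base => simp
  | succ n hpn ih =>
    have hmono : (n - 1).choose l ≤ n.choose l := Nat.choose_le_choose l (Nat.sub_le n 1)
    rw [Nat.choose_succ_succ', Nat.add_sub_cancel, Nat.sub_add_comm hpn, Nat.succ_mul]
    nlinarith

theorem one_sub_choose_div_choose_le {p n l : ℕ} (hp : p ≤ n) (hl : l ≤ n) (hn : 0 < n) :
    1 - (p.choose l : ℝ) / n.choose l ≤ l * (n - p) / n := by
  have hcn : (0 : ℝ) < n.choose l := by exact_mod_cast Nat.choose_pos hl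
  rw [one_sub_div hcn.ne', div_le_div_iff₀ hcn (by exact_mod_cast hn)]
  obtain _ | k := l
  · simp
  obtain ⟨m, rfl⟩ : ∃ m, n = m + 1 := ⟨n - 1, by omega⟩
  have hsub : ((m + 1).choose (k + 1) : ℝ) ≤ p.choose (k + 1) + (m + 1 - p) * m.choose k := by
    have := Nat.choose_succ_le_choose_add_sub_mul k hp
    rw [Nat.add_sub_cancel] at this
    exact_mod_cast this
  have hpascal : ((m + 1 : ℕ) : ℝ) * m.choose k = (m + 1).choose (k + 1) * (k + 1 : ℕ) := by
    exact_mod_cast Nat.add_one_mul_choose_eq m k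
  push_cast at hpascal ⊢
  have hpm : (p : ℝ) ≤ m + 1 := by exact_mod_cast hp
  nlinarith [mul_le_mul_of_nonneg_left hsub (by linarith : (0 : ℝ) ≤ m + 1)]

theorem sum_range_sub_mul_pow_div_factorial (x : ℝ) (m : ℕ) :
    ∑ p ∈ range m, (x - p) * x ^ p / p.factorial = m * x ^ m / m.factorial := by
  induction m with
  | zero => simp
  | succ m ih =>
    rw [sum_range_succ, ih, Nat.factorial_succ]
    have : (0 : ℝ) < m.factorial := by exact_mod_cast m.factorial_pos
    push_cast
    field_simp
    ring

theorem exp_neg_mul_pow_div_factorial_le {n : ℕ} (hn : 0 < n) :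
    exp (-n) * (n : ℝ) ^ n / n.factorial ≤ 1 / √n := by
  have hfac : (0 : ℝ) < n.factorial := by exact_mod_cast n.factorial_pos
  have hsqrt : (0 : ℝ) < √n := Real.sqrt_pos.2 (by exact_mod_cast hn)
  have hstirling : √n * (exp (-n) * (n : ℝ) ^ n) ≤ n.factorial :=
    calc √n * (exp (-n) * (n : ℝ) ^ n)
        ≤ √(2 * π * n) * (n / exp 1) ^ n := by
          rw [div_pow, exp_one_pow, exp_neg, mul_comm (exp _)⁻¹, ← div_eq_mul_inv]
          gcongr
          nlinarith [pi_gt_three]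
      _ ≤ n.factorial := Stirling.le_factorial_stirling n
  rw [div_le_div_iff₀ hfac hsqrt]
  linarith

theorem one_sub_exp_neg_mul_tsum_eq_exp_neg_mul_sum (x : ℝ) (r : ℕ → ℝ) {n : ℕ}
    (hr : ∀ p, n ≤ p → r p = 1) :
    1 - exp (-x) * ∑' p, x ^ p / p.factorial * r p
      = exp (-x) * ∑ p ∈ range n, x ^ p / p.factorial * (1 - r p) := by
  have hexp : HasSum (fun p => x ^ p / p.factorial) (exp x) := by
    rw [exp_eq_exp_ℝ]; exact NormedSpace.expSeries_div_hasSum_exp x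
  have hdefect : HasSum (fun p => x ^ p / p.factorial * (1 - r p))
      (∑ p ∈ range n, x ^ p / p.factorial * (1 - r p)) :=
    hasSum_sum_of_ne_finset_zero fun p hp => by
      rw [hr p (by simpa using hp), sub_self, mul_zero]
  rw [((hexp.sub hdefect).congr_fun fun p => by ring).tsum_eq, mul_sub, ← exp_add,
    neg_add_cancel, exp_zero]
  ring

theorem sum_range_pow_div_factorial_mul_one_sub_choose_div_choose_le {n l : ℕ} (hl : l ≤ n)
    (hn : 0 < n) :
    ∑ p ∈ range n, (n : ℝ) ^ p / p.factorial * (1 - (p.choose l : ℝ) / n.choose l)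
      ≤ l * (n : ℝ) ^ n / n.factorial :=
  calc ∑ p ∈ range n, (n : ℝ) ^ p / p.factorial * (1 - (p.choose l : ℝ) / n.choose l)
      ≤ ∑ p ∈ range n, l / n * ((n - p) * (n : ℝ) ^ p / p.factorial) := by
        refine sum_le_sum fun p hp => ?_
        calc (n : ℝ) ^ p / p.factorial * (1 - (p.choose l : ℝ) / n.choose l)
            ≤ (n : ℝ) ^ p / p.factorial * (l * (n - p) / n) := by
              gcongr
              exact one_sub_choose_div_choose_le (mem_range.1 hp).le hl hn
          _ = l / n * ((n - p) * (n : ℝ) ^ p / p.factorial) := by ring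
    _ = l * (n : ℝ) ^ n / n.factorial := by
        rw [← mul_sum, sum_range_sub_mul_pow_div_factorial]
        field_simp

/-- **Rate of convergence of `b(n,l)` to 1.** For a fixed `l ≥ 1`, with
`b(n,l) = e^{-n} ∑_{p} (n^p/p!) C(min(n,p),l)/C(n,l)`, one has
`1 - b(n,l) = O(n^{-1/2})` as `n → ∞`. -/
theorem one_sub_b_isBigO (l : ℕ) (hl : 1 ≤ l) :
    ∃ C > (0 : ℝ), ∃ n₀ : ℕ, l ≤ n₀ ∧ ∀ n ≥ n₀,
      |1 - Real.exp (-n) * ∑' p : ℕ, (n : ℝ) ^ p / p.factorial *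
          ((Nat.choose (min n p) l : ℝ) / (Nat.choose n l : ℝ))|
        ≤ C * (n : ℝ) ^ (-(1 : ℝ) / 2) := by
  refine ⟨l, by exact_mod_cast hl, l, le_rfl, fun n hln => ?_⟩
  have hn : 0 < n := by omega
  have hcn : (0 : ℝ) < n.choose l := by exact_mod_cast Nat.choose_pos hln
  rw [one_sub_exp_neg_mul_tsum_eq_exp_neg_mul_sum (n : ℝ) _ fun p hp => by
      rw [min_eq_left hp, div_self hcn.ne'],
    sum_congr rfl fun p hp => by rw [min_eq_right (mem_range.1 hp).le]]
  have hdefect_nonneg : ∀ p ∈ range n, 0 ≤ 1 - (p.choose l : ℝ) / n.choose l := fun p hp => by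
    rw [sub_nonneg, div_le_one hcn]
    exact_mod_cast Nat.choose_le_choose l (mem_range.1 hp).le
  rw [abs_of_nonneg <| mul_nonneg (exp_pos _).le <|
    sum_nonneg fun p hp => mul_nonneg (by positivity) (hdefect_nonneg p hp)]
  calc exp (-n) * ∑ p ∈ range n, (n : ℝ) ^ p / p.factorial * (1 - (p.choose l : ℝ) / n.choose l)
      ≤ exp (-n) * (l * (n : ℝ) ^ n / n.factorial) := by
        gcongr
        exact sum_range_pow_div_factorial_mul_one_sub_choose_div_choose_le hln hn
    _ = l * (exp (-n) * (n : ℝ) ^ n / n.factorial) := by ring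
    _ ≤ l * (1 / √n) :=
        mul_le_mul_of_nonneg_left (exp_neg_mul_pow_div_factorial_le hn) l.cast_nonneg
    _ = l * (n : ℝ) ^ (-(1 : ℝ) / 2) := by
        rw [sqrt_eq_rpow, one_div, ← rpow_neg (Nat.cast_nonneg n), neg_div]
end

section
/- Let q ≥ 2 be an integer, B > 1 a real number, and let b : ℝ → ℝ be a continuous function, not identically zero, whose support is contained in [B^{−1}, B]. Set η_q = (q−1)/2, ω_q = 2π^{(q+1)/2}/Γ((q+1)/2), and for each integer j ≥ 1 define γ_{j,q} := (ω_q B^{qj})^{−1} Σ_{ℓ=1}^∞ b^4(ℓ/B^j) · ((ℓ+η_q)/(η_q ω_q)) · C(ℓ+q−2, ℓ), where C(a,b) is the binomial coefficient (the sum is finite since b is supported in [B^{−1}, B]). Then there exist constants 0 < c_1 ≤ c_2 (depending on q, B, b) such that γ_{j,q} ≤ c_2 for every j ≥ 1, and c_1 ≤ γ_{j,q} for all sufficiently large j. -/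
/-!
Only the frequencies `ℓ ≍ B^j` contribute to `γ_{j,q}`, and on them the weight
`((ℓ + η_q)/(η_q ω_q)) C(ℓ+q-2, ℓ)` is of order `ℓ^{q-1}`. From above, at most `B^{j+1}` terms,
each at most `sup b⁴ · B^{(j+1)(q-1)}`, give a sum `O(B^{qj})`. From below, if `b x₀ ≠ 0` then
`b⁴ > b⁴(x₀)/2` on some `[x₀, u]`, and the `≍ (u - x₀) B^j` frequencies with `ℓ/B^j ∈ [x₀, u]`
each contribute `≫ (x₀ B^j)^{q-1}`, so the sum is `≫ B^{qj}` once `B^j` is large.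
-/

/-- The surface measure `ω_q` of the `q`-dimensional unit sphere. -/
noncomputable def omegaQ (q : ℕ) : ℝ :=
  2 * Real.pi ^ (((q : ℝ) + 1) / 2) / Real.Gamma (((q : ℝ) + 1) / 2)

/-- `η_q = (q-1)/2`. -/
noncomputable def etaQ (q : ℕ) : ℝ := ((q : ℝ) - 1) / 2

/-- The normalized variance constant
`γ_{j,q} = (ω_q B^{qj})⁻¹ ∑_{ℓ=1}^∞ b^4(ℓ/B^j) ((ℓ+η_q)/(η_q ω_q)) C(ℓ+q-2, ℓ)`. -/
noncomputable def gammaJQ (q : ℕ) (B : ℝ) (b : ℝ → ℝ) (j : ℕ) : ℝ :=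
  (omegaQ q * B ^ (q * j))⁻¹ *
    ∑' ℓ : ℕ, (b (((ℓ : ℝ) + 1) / B ^ j)) ^ 4 *
      ((((ℓ : ℝ) + 1) + etaQ q) / (etaQ q * omegaQ q)) *
      (Nat.choose (ℓ + 1 + q - 2) (ℓ + 1) : ℝ)

open Finset Filter

section LatticeSums

variable {F : ℕ → ℝ} {X : ℝ}

lemma apply_eq_zero_of_notMem_range_floor (hF : ∀ ℓ : ℕ, X < ℓ + 1 → F ℓ = 0) {ℓ : ℕ}
    (hℓ : ℓ ∉ range ⌊X⌋₊) : F ℓ = 0 :=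
  hF ℓ <| (Nat.lt_floor_add_one X).trans_le <| by
    exact_mod_cast Nat.succ_le_succ (not_lt.1 (mem_range.not.1 hℓ))

lemma summable_of_eq_zero_of_lt (hF : ∀ ℓ : ℕ, X < ℓ + 1 → F ℓ = 0) : Summable F :=
  summable_of_ne_finset_zero fun _ ↦ apply_eq_zero_of_notMem_range_floor hF

lemma tsum_le_mul_of_eq_zero_of_lt {K : ℝ} (hX : 0 ≤ X) (hK : 0 ≤ K)
    (hFK : ∀ ℓ : ℕ, (ℓ : ℝ) + 1 ≤ X → F ℓ ≤ K) (hF : ∀ ℓ : ℕ, X < ℓ + 1 → F ℓ = 0) :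
    ∑' ℓ, F ℓ ≤ X * K := by
  rw [tsum_eq_sum fun _ ↦ apply_eq_zero_of_notMem_range_floor hF]
  calc ∑ ℓ ∈ range ⌊X⌋₊, F ℓ ≤ ∑ _ℓ ∈ range ⌊X⌋₊, K :=
        sum_le_sum fun ℓ hℓ ↦ hFK ℓ <| by
          exact_mod_cast (Nat.le_floor_iff' ℓ.succ_ne_zero).1 (mem_range.1 hℓ)
    _ = ⌊X⌋₊ * K := by rw [sum_const, card_range, nsmul_eq_mul]
    _ ≤ X * K := mul_le_mul_of_nonneg_right (Nat.floor_le hX) hK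

lemma le_tsum_of_le_of_mem_Icc {a u t : ℝ} (ha : 0 ≤ a) (ht : 0 ≤ t) (hF0 : ∀ ℓ, 0 ≤ F ℓ)
    (hFs : Summable F) (hF : ∀ ℓ : ℕ, a ≤ ℓ → (ℓ : ℝ) + 1 ≤ u → t ≤ F ℓ) :
    (u - a - 2) * t ≤ ∑' ℓ, F ℓ := by
  have hcard : u - a - 2 ≤ #(Ico ⌈a⌉₊ ⌊u⌋₊) := by
    rw [Nat.card_Ico]
    have := Nat.ceil_lt_add_one (R := ℝ) ha
    have := Nat.lt_floor_add_one u
    have : (⌊u⌋₊ : ℝ) ≤ ((⌊u⌋₊ - ⌈a⌉₊ : ℕ) : ℝ) + ⌈a⌉₊ := by exact_mod_cast le_tsub_add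
    linarith
  calc (u - a - 2) * t ≤ #(Ico ⌈a⌉₊ ⌊u⌋₊) * t := mul_le_mul_of_nonneg_right hcard ht
    _ = ∑ _ℓ ∈ Ico ⌈a⌉₊ ⌊u⌋₊, t := by rw [sum_const, nsmul_eq_mul]
    _ ≤ ∑ ℓ ∈ Ico ⌈a⌉₊ ⌊u⌋₊, F ℓ := sum_le_sum fun ℓ hℓ ↦ by
        obtain ⟨haℓ, hℓu⟩ := mem_Ico.1 hℓ
        exact hF ℓ (Nat.ceil_le.1 haℓ) (by exact_mod_cast (Nat.le_floor_iff' ℓ.succ_ne_zero).1 hℓu)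
    _ ≤ ∑' ℓ, F ℓ := hFs.sum_le_tsum _ fun ℓ _ ↦ hF0 ℓ

end LatticeSums

section ScaledSums

variable {g : ℝ → ℝ} {w : ℕ → ℝ} {s R : ℝ} {p : ℕ}

lemma comp_div_mul_eq_zero_of_lt (hs : 0 < s) (hgR : ∀ x, R < x → g x = 0) {ℓ : ℕ}
    (hℓ : R * s < ℓ + 1) : g ((ℓ + 1) / s) * w (ℓ + 1) = 0 := by
  rw [hgR _ ((lt_div_iff₀ hs).2 hℓ), zero_mul]

lemma tsum_comp_div_mul_le {M A : ℝ} (hs : 0 < s) (hR : 0 ≤ R) (hg0 : ∀ x, 0 ≤ g x)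
    (hgM : ∀ x, g x ≤ M) (hgR : ∀ x, R < x → g x = 0) (hw0 : ∀ n, 0 ≤ w n)
    (hwA : ∀ n, 1 ≤ n → w n ≤ A * n ^ p) :
    ∑' ℓ : ℕ, g ((ℓ + 1) / s) * w (ℓ + 1) ≤ R * s * (M * (A * (R * s) ^ p)) := by
  have hM : 0 ≤ M := (hg0 0).trans (hgM 0)
  have hA : 0 ≤ A := (hw0 1).trans (by simpa using hwA 1 le_rfl)
  refine tsum_le_mul_of_eq_zero_of_lt (by positivity) (by positivity) (fun ℓ hℓ ↦ ?_)
    fun ℓ ↦ comp_div_mul_eq_zero_of_lt hs hgR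
  have hwℓ : w (ℓ + 1) ≤ A * ((ℓ : ℝ) + 1) ^ p := by exact_mod_cast hwA (ℓ + 1) le_add_self
  calc g ((ℓ + 1) / s) * w (ℓ + 1) ≤ M * (A * ((ℓ : ℝ) + 1) ^ p) :=
        mul_le_mul (hgM _) hwℓ (hw0 _) hM
    _ ≤ M * (A * (R * s) ^ p) := by gcongr

lemma le_tsum_comp_div_mul {a u δ c : ℝ} (hs : 0 < s) (ha : 0 < a) (hδ : 0 ≤ δ) (hc : 0 ≤ c)
    (hg0 : ∀ x, 0 ≤ g x) (hgδ : ∀ x ∈ Set.Icc a u, δ ≤ g x) (hgR : ∀ x, R < x → g x = 0)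
    (hw0 : ∀ n, 0 ≤ w n) (hwc : ∀ n, 1 ≤ n → c * n ^ p ≤ w n) :
    (u * s - a * s - 2) * (δ * (c * (a * s) ^ p)) ≤ ∑' ℓ : ℕ, g ((ℓ + 1) / s) * w (ℓ + 1) := by
  refine le_tsum_of_le_of_mem_Icc (by positivity) (by positivity)
    (fun ℓ ↦ mul_nonneg (hg0 _) (hw0 _))
    (summable_of_eq_zero_of_lt fun ℓ ↦ comp_div_mul_eq_zero_of_lt hs hgR) fun ℓ haℓ hℓu ↦ ?_
  have hmem : ((ℓ : ℝ) + 1) / s ∈ Set.Icc a u :=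
    ⟨(le_div_iff₀ hs).2 (by linarith), (div_le_iff₀ hs).2 hℓu⟩
  have hwℓ : c * ((ℓ : ℝ) + 1) ^ p ≤ w (ℓ + 1) := by exact_mod_cast hwc (ℓ + 1) le_add_self
  refine mul_le_mul (hgδ _ hmem) (le_trans ?_ hwℓ) (by positivity) (hg0 _)
  gcongr
  linarith

end ScaledSums

noncomputable def sphereWeight (q n : ℕ) : ℝ :=
  ((n : ℝ) + etaQ q) / (etaQ q * omegaQ q) * ((n + q - 2).choose n : ℝ)

lemma gammaJQ_eq_tsum_sphereWeight (q : ℕ) (B : ℝ) (b : ℝ → ℝ) (j : ℕ) :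
    gammaJQ q B b j =
      (omegaQ q * B ^ (q * j))⁻¹ * ∑' ℓ : ℕ, b ((ℓ + 1) / B ^ j) ^ 4 * sphereWeight q (ℓ + 1) := by
  simp only [gammaJQ, sphereWeight, Nat.cast_add, Nat.cast_one, mul_assoc]

lemma omegaQ_pos (q : ℕ) : 0 < omegaQ q := by
  have := Real.Gamma_pos_of_pos (by positivity : (0 : ℝ) < ((q : ℝ) + 1) / 2)
  unfold omegaQ
  positivity

lemma etaQ_pos {q : ℕ} (hq : 2 ≤ q) : 0 < etaQ q := by
  have : (2 : ℝ) ≤ q := by exact_mod_cast hq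
  unfold etaQ
  linarith

section SphereWeight

variable {q : ℕ} (hq : 2 ≤ q)
include hq

lemma sphereWeight_nonneg (n : ℕ) : 0 ≤ sphereWeight q n := by
  have := etaQ_pos hq
  have := omegaQ_pos q
  unfold sphereWeight
  positivity

lemma sphereWeight_le {n : ℕ} (hn : 1 ≤ n) :
    sphereWeight q n ≤ (1 + etaQ q) * 2 ^ (q - 2) / (etaQ q * omegaQ q) * n ^ (q - 1) := by
  obtain ⟨r, rfl⟩ : ∃ r, q = r + 2 := ⟨q - 2, by omega⟩
  have hη := etaQ_pos hq
  have := omegaQ_pos (r + 2)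
  have hn' : (1 : ℝ) ≤ n := by exact_mod_cast hn
  have hchoose : ((n + r).choose n : ℝ) ≤ (2 * n) ^ r := by
    rw [Nat.choose_symm_add]
    calc ((n + r).choose r : ℝ) ≤ ((n + 1) ^ r : ℕ) := by
          exact_mod_cast Nat.choose_add_le_add_one_pow n r
      _ ≤ (2 * n) ^ r := by push_cast; gcongr; linarith
  simp only [sphereWeight, show n + (r + 2) - 2 = n + r by omega,
    show r + 2 - 2 = r by omega, show r + 2 - 1 = r + 1 by omega]
  calc ((n : ℝ) + etaQ (r + 2)) / (etaQ (r + 2) * omegaQ (r + 2)) * ((n + r).choose n : ℝ)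
      ≤ (1 + etaQ (r + 2)) * n / (etaQ (r + 2) * omegaQ (r + 2)) * (2 * n) ^ r := by
        gcongr
        nlinarith
    _ = _ := by ring

lemma le_sphereWeight (n : ℕ) :
    1 / (etaQ q * omegaQ q * (q - 2).factorial) * n ^ (q - 1) ≤ sphereWeight q n := by
  obtain ⟨r, rfl⟩ : ∃ r, q = r + 2 := ⟨q - 2, by omega⟩
  have hη := etaQ_pos hq
  have := omegaQ_pos (r + 2)
  have hchoose : ((n : ℝ) + 1) ^ r / r.factorial ≤ ((n + r).choose n : ℝ) := by
    rw [Nat.choose_symm_add]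
    have := Nat.pow_le_choose (α := ℝ) r (n + r)
    rwa [show n + r + 1 - r = n + 1 by omega, Nat.cast_add, Nat.cast_one] at this
  simp only [sphereWeight, show n + (r + 2) - 2 = n + r by omega,
    show r + 2 - 2 = r by omega, show r + 2 - 1 = r + 1 by omega]
  calc 1 / (etaQ (r + 2) * omegaQ (r + 2) * r.factorial) * (n : ℝ) ^ (r + 1)
      = n / (etaQ (r + 2) * omegaQ (r + 2)) * ((n : ℝ) ^ r / r.factorial) := by
        field_simp
        ring
    _ ≤ ((n : ℝ) + etaQ (r + 2)) / (etaQ (r + 2) * omegaQ (r + 2)) *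
          (((n : ℝ) + 1) ^ r / r.factorial) := by
        gcongr <;> linarith
    _ ≤ _ := by gcongr

end SphereWeight

section Gamma

variable {q : ℕ} {B : ℝ} {b : ℝ → ℝ}

lemma pow_eq_zero_of_support_subset_Iic {k : ℕ} (hk : k ≠ 0)
    (hsupp : Function.support b ⊆ Set.Iic B) {x : ℝ} (hx : B < x) : b x ^ k = 0 := by
  rw [Function.notMem_support.1 fun h ↦ (hsupp h).not_gt hx, zero_pow hk]

lemma exists_gammaJQ_le (hq : 2 ≤ q) (hB : 1 < B) (hb : Continuous b)
    (hsupp : Function.support b ⊆ Set.Icc B⁻¹ B) : ∃ C, ∀ j, gammaJQ q B b j ≤ C := by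
  obtain ⟨p, rfl⟩ : ∃ p, q = p + 1 := ⟨q - 1, by omega⟩
  have hB0 : 0 < B := by linarith
  have hω := omegaQ_pos (p + 1)
  have hvanish {x : ℝ} : B < x → b x ^ 4 = 0 :=
    pow_eq_zero_of_support_subset_Iic four_ne_zero (hsupp.trans Set.Icc_subset_Iic_self)
  obtain ⟨M, hM⟩ := (hb.pow 4).bounded_above_of_compact_support
    ((HasCompactSupport.of_support_subset_isCompact isCompact_Icc hsupp).comp_left
      (zero_pow four_ne_zero))
  obtain ⟨A, hwA⟩ : ∃ A, ∀ n, 1 ≤ n → sphereWeight (p + 1) n ≤ A * n ^ p :=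
    ⟨_, fun _ hn ↦ sphereWeight_le hq hn⟩
  refine ⟨M * A * B ^ (p + 1) / omegaQ (p + 1), fun j ↦ ?_⟩
  have hsum := tsum_comp_div_mul_le (g := fun x ↦ b x ^ 4) (w := sphereWeight (p + 1))
    (s := B ^ j) (R := B) (by positivity) hB0.le (fun x ↦ by positivity)
    (fun x ↦ (le_abs_self _).trans (hM x)) (fun _ ↦ hvanish)
    (sphereWeight_nonneg hq) hwA
  rw [gammaJQ_eq_tsum_sphereWeight]
  calc _ ≤ (omegaQ (p + 1) * B ^ ((p + 1) * j))⁻¹ * (B * B ^ j * (M * (A * (B * B ^ j) ^ p))) := by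
        gcongr
    _ = M * A * B ^ (p + 1) / omegaQ (p + 1) := by
        field_simp
        ring

lemma exists_pos_le_gammaJQ (hq : 2 ≤ q) (hB : 1 < B) (hb : Continuous b) (hbne : ∃ x, b x ≠ 0)
    (hsupp : Function.support b ⊆ Set.Icc B⁻¹ B) :
    ∃ c > 0, ∀ᶠ j in atTop, c ≤ gammaJQ q B b j := by
  obtain ⟨p, rfl⟩ : ∃ p, q = p + 1 := ⟨q - 1, by omega⟩
  have hB0 : 0 < B := by linarith
  have hω := omegaQ_pos (p + 1)
  have hvanish {x : ℝ} : B < x → b x ^ 4 = 0 :=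
    pow_eq_zero_of_support_subset_Iic four_ne_zero (hsupp.trans Set.Icc_subset_Iic_self)
  obtain ⟨x₀, hx₀⟩ := hbne
  have hx₀pos : 0 < x₀ := (inv_pos.2 hB0).trans_le (hsupp hx₀).1
  set δ := b x₀ ^ 4 / 2
  have hδ : 0 < δ := by positivity
  obtain ⟨u, hu, hδu⟩ : ∃ u ∈ Set.Ioi x₀, Set.Icc x₀ u ⊆ {x | δ < b x ^ 4} :=
    mem_nhdsGE_iff_exists_Icc_subset.1 <| nhdsWithin_le_nhds <|
      ((hb.tendsto x₀).pow 4).eventually_const_lt (half_lt_self (by positivity))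
  have hux₀ : 0 < u - x₀ := sub_pos.2 hu
  obtain ⟨c, hc, hwc⟩ : ∃ c > 0, ∀ n, 1 ≤ n → c * n ^ p ≤ sphereWeight (p + 1) n :=
    ⟨_, by have := etaQ_pos hq; positivity, fun n _ ↦ le_sphereWeight hq n⟩
  refine ⟨(u - x₀) * (δ * (c * x₀ ^ p)) / (2 * omegaQ (p + 1)), by positivity, ?_⟩
  filter_upwards [(tendsto_pow_atTop_atTop_of_one_lt hB).eventually_ge_atTop (4 / (u - x₀))]
    with j hj
  have hsum := le_tsum_comp_div_mul (g := fun x ↦ b x ^ 4) (w := sphereWeight (p + 1))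
    (s := B ^ j) (R := B) (by positivity) hx₀pos hδ.le hc.le (fun x ↦ by positivity)
    (fun x hx ↦ (hδu hx).le) (fun _ ↦ hvanish) (sphereWeight_nonneg hq) hwc
  have hlen : (u - x₀) * B ^ j / 2 ≤ u * B ^ j - x₀ * B ^ j - 2 := by
    have := (div_le_iff₀ hux₀).1 hj
    linarith
  rw [gammaJQ_eq_tsum_sphereWeight]
  calc (u - x₀) * (δ * (c * x₀ ^ p)) / (2 * omegaQ (p + 1))
      = (omegaQ (p + 1) * B ^ ((p + 1) * j))⁻¹ *
          ((u - x₀) * B ^ j / 2 * (δ * (c * (x₀ * B ^ j) ^ p))) := by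
        field_simp
        ring
    _ ≤ (omegaQ (p + 1) * B ^ ((p + 1) * j))⁻¹ *
          ((u * B ^ j - x₀ * B ^ j - 2) * (δ * (c * (x₀ * B ^ j) ^ p))) := by gcongr
    _ ≤ _ := by gcongr

end Gamma

/-- **Two-sided bounds on the variance constants `γ_{j,q}`.** There exist constants
`0 < c₁ ≤ c₂` with `γ_{j,q} ≤ c₂` for every `j ≥ 1`, and `c₁ ≤ γ_{j,q}` for all
sufficiently large `j`. -/
theorem gammaJQ_bounds (q : ℕ) (hq : 2 ≤ q) (B : ℝ) (hB : 1 < B)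
    (b : ℝ → ℝ) (hb : Continuous b) (hbne : ∃ x, b x ≠ 0)
    (hsupp : Function.support b ⊆ Set.Icc B⁻¹ B) :
    ∃ c₁ c₂ : ℝ, 0 < c₁ ∧ c₁ ≤ c₂ ∧
      (∀ j : ℕ, 1 ≤ j → gammaJQ q B b j ≤ c₂) ∧
      (∃ J : ℕ, ∀ j ≥ J, c₁ ≤ gammaJQ q B b j) := by
  obtain ⟨C, hC⟩ := exists_gammaJQ_le hq hB hb hsupp
  obtain ⟨c, hc, hcγ⟩ := exists_pos_le_gammaJQ hq hB hb hbne hsupp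
  exact ⟨c, max C c, hc, le_max_right _ _, fun j _ ↦ (hC j).trans (le_max_left _ _),
    eventually_atTop.1 hcγ⟩
end

section
/- Let q ≥ 2 be an integer, let S^q denote the unit sphere in ℝ^{q+1} equipped with its surface measure dz and geodesic distance d(z_1, z_2) = arccos⟨z_1, z_2⟩, and let f : S^q → ℝ be a measurable density with 0 ≤ f(z) ≤ M for all z. Fix B > 1, an integer j ≥ 0, real numbers κ > 0 and τ ≥ 2, integers n_1, n_2 ≥ 2, and points ξ_1, ξ_2 ∈ S^q. Suppose ψ_1, ψ_2 : S^q → ℝ are measurable functions satisfying the localization bounds |ψ_i(z)| ≤ κ B^{qj/2} / (1 + B^{qj/2} d(z, ξ_i))^τ for i = 1, 2 and all z ∈ S^q. Then there exists a constant C > 0, depending only on q, τ, κ, M, n_1, n_2 (not on j, ξ_1, ξ_2), such that ∫_{S^q} |ψ_1(z)|^{n_1} |ψ_2(z)|^{n_2} f(z) dz ≤ C · B^{((n_1+n_2)/2 − 1) q j} · (1 + B^{qj/2} d(ξ_1, ξ_2))^{−min(n_1, n_2) τ}. -/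
/-!
Write `δ = B^{qj/2}`, `d(z, ξ) = arccos ⟪z, ξ⟫` and `dᵢ(z) = 1 + δ d(z, ξᵢ)`. By the triangle
inequality `d₁ + d₂ ≥ D := 1 + δ d(ξ₁, ξ₂)`, so one of the `dᵢ` is at least `D / 2`: spending the
exponent `min n₁ n₂ · τ` of that factor on `D / 2` and keeping only the exponent `4 ≤ nᵢ τ` of the
other gives `|ψ₁|^{n₁} |ψ₂|^{n₂} f ≲ δ^{n₁+n₂} D^{-min n₁ n₂ · τ} (d₁⁻⁴ + d₂⁻⁴)`.

It remains to see `∫_{S^q} (1 + δ d(z, ξ))⁻⁴ dz ≲ δ⁻²`. The exponential map of the sphere at `ξ` is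
Lipschitz on the ball of radius `π` of `ℝ^q` and maps the ball of radius `r ≤ π` onto the cap of
radius `r`, so caps have measure `≲ min(r, π)^q ≤ π^{q-2} r²`. On the shell `k ≤ δ d(z, ξ) < k + 1`
the integrand is at most `(1 + k)⁻⁴` and the shell lies in the cap of radius `(k + 1) / δ`, so the
integral is `≲ δ⁻² ∑ (k + 1)⁻² = (π² / 6) δ⁻²`.
-/

open MeasureTheory Metric Real InnerProductGeometry Module
open scoped RealInnerProductSpace ENNReal

namespace Real

lemma mul_sinc (x : ℝ) : x * sinc x = sin x := by
  rcases eq_or_ne x 0 with rfl | hx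
  · simp
  · rw [sinc_of_ne_zero hx]; field_simp

lemma sinc_eq_integral (x : ℝ) : sinc x = ∫ u in (0 : ℝ)..1, cos (x * u) := by
  rcases eq_or_ne x 0 with rfl | hx
  · simp
  · rw [intervalIntegral.integral_comp_mul_left (fun u => cos u) hx, integral_cos,
      sinc_of_ne_zero hx]
    simp [div_eq_inv_mul]

lemma abs_sinc_sub_sinc_le (x y : ℝ) : |sinc x - sinc y| ≤ |x - y| := by
  have hint : ∀ t : ℝ, IntervalIntegrable (fun u => cos (t * u)) volume 0 1 := fun t =>
    (continuous_cos.comp (continuous_const.mul continuous_id)).intervalIntegrable 0 1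
  rw [sinc_eq_integral, sinc_eq_integral, ← intervalIntegral.integral_sub (hint x) (hint y),
    ← Real.norm_eq_abs]
  refine (intervalIntegral.norm_integral_le_of_norm_le_const (C := |x - y|)
    fun u hu => ?_).trans_eq (by simp)
  rw [Set.uIoc_of_le zero_le_one] at hu
  calc ‖cos (x * u) - cos (y * u)‖ ≤ |x * u - y * u| := abs_cos_sub_cos_le _ _
    _ = |x - y| * |u| := by rw [← sub_mul, abs_mul]
    _ ≤ |x - y| := mul_le_of_le_one_right (abs_nonneg _) (abs_le.mpr ⟨by linarith [hu.1], hu.2⟩)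

end Real

lemma one_le_one_add_mul_arccos {δ : ℝ} (hδ : 0 ≤ δ) (x : ℝ) : 1 ≤ 1 + δ * arccos x :=
  le_add_of_nonneg_right (mul_nonneg hδ (arccos_nonneg x))

lemma arccos_inner_le_add {E : Type*} [NormedAddCommGroup E] [InnerProductSpace ℝ E]
    {x y z : E} (hx : ‖x‖ = 1) (hy : ‖y‖ = 1) (hz : ‖z‖ = 1) :
    arccos ⟪x, z⟫ ≤ arccos ⟪x, y⟫ + arccos ⟪y, z⟫ := by
  simpa [angle, hx, hy, hz] using angle_le_angle_add_angle x y z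

lemma rpow_neg_mul_rpow_neg_le_of_le {a b D s t u : ℝ} (ha : 1 ≤ a) (hb : 1 ≤ b) (hD : 0 < D)
    (hDa : D ≤ 2 * a) (hu : 0 ≤ u) (hus : u ≤ s) (ht : 4 ≤ t) :
    a ^ (-s) * b ^ (-t) ≤ (D / 2) ^ (-u) * (b ^ 4)⁻¹ := by
  have ha' : a ^ (-s) ≤ (D / 2) ^ (-u) :=
    calc a ^ (-s) ≤ a ^ (-u) := rpow_le_rpow_of_exponent_le ha (by linarith)
      _ ≤ (D / 2) ^ (-u) := rpow_le_rpow_of_nonpos (by positivity) (by linarith) (by linarith)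
  have hb' : b ^ (-t) ≤ (b ^ 4)⁻¹ := by
    rw [← rpow_natCast, ← rpow_neg (by positivity)]
    exact rpow_le_rpow_of_exponent_le hb (by push_cast; linarith)
  exact mul_le_mul ha' hb' (by positivity) (by positivity)

lemma rpow_neg_mul_rpow_neg_le {a b D s t u : ℝ} (ha : 1 ≤ a) (hb : 1 ≤ b) (hD : 0 < D)
    (hab : D ≤ a + b) (hu : 0 ≤ u) (hus : u ≤ s) (hut : u ≤ t) (hs : 4 ≤ s) (ht : 4 ≤ t) :
    a ^ (-s) * b ^ (-t) ≤ (D / 2) ^ (-u) * ((a ^ 4)⁻¹ + (b ^ 4)⁻¹) := by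
  rcases le_total D (2 * a) with h | h
  · refine (rpow_neg_mul_rpow_neg_le_of_le ha hb hD h hu hus ht).trans ?_
    gcongr
    exact le_add_of_nonneg_left (by positivity)
  · rw [mul_comm]
    refine (rpow_neg_mul_rpow_neg_le_of_le hb ha hD (by linarith) hu hut hs).trans ?_
    gcongr
    exact le_add_of_nonneg_right (by positivity)

lemma pow_abs_le_of_abs_le_div_rpow {p κ δ a τ : ℝ} (hδ : 0 ≤ δ) (ha : 0 < a)
    (hp : |p| ≤ κ * δ / a ^ τ) (n : ℕ) : |p| ^ n ≤ (|κ| * δ) ^ n * a ^ (-τ * n) := by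
  calc |p| ^ n ≤ (|κ| * δ / a ^ τ) ^ n := by
        gcongr
        exact hp.trans (by gcongr; exact le_abs_self κ)
    _ = (|κ| * δ) ^ n * a ^ (-τ * n) := by
        rw [div_eq_mul_inv, mul_pow, rpow_mul_natCast ha.le, rpow_neg ha.le]

lemma abs_pow_mul_abs_pow_mul_abs_le {p₁ p₂ y κ δ M a b D τ : ℝ} {n₁ n₂ : ℕ} (hδ : 0 ≤ δ)
    (ha : 1 ≤ a) (hb : 1 ≤ b) (hD : 0 < D) (hab : D ≤ a + b) (hτ : 2 ≤ τ) (hn₁ : 2 ≤ n₁)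
    (hn₂ : 2 ≤ n₂) (h₁ : |p₁| ≤ κ * δ / a ^ τ) (h₂ : |p₂| ≤ κ * δ / b ^ τ) (hy : |y| ≤ M) :
    |p₁| ^ n₁ * |p₂| ^ n₂ * |y| ≤
      |M| * (|κ| * δ) ^ (n₁ + n₂) * (D / 2) ^ (-((min n₁ n₂ : ℝ) * τ)) *
        ((a ^ 4)⁻¹ + (b ^ 4)⁻¹) := by
  have hn₁' : (2 : ℝ) ≤ n₁ := by exact_mod_cast hn₁
  have hn₂' : (2 : ℝ) ≤ n₂ := by exact_mod_cast hn₂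
  have hdecay : a ^ (-(τ * n₁)) * b ^ (-(τ * n₂)) ≤
      (D / 2) ^ (-((min n₁ n₂ : ℝ) * τ)) * ((a ^ 4)⁻¹ + (b ^ 4)⁻¹) := by
    refine rpow_neg_mul_rpow_neg_le ha hb hD hab (by positivity) ?_ ?_ (by nlinarith) (by nlinarith)
    · rw [mul_comm τ]; exact mul_le_mul_of_nonneg_right (min_le_left _ _) (by linarith)
    · rw [mul_comm τ]; exact mul_le_mul_of_nonneg_right (min_le_right _ _) (by linarith)
  have ha₀ : 0 < a := by linarith
  have hb₀ : 0 < b := by linarith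
  calc |p₁| ^ n₁ * |p₂| ^ n₂ * |y|
      ≤ (|κ| * δ) ^ n₁ * a ^ (-τ * n₁) * ((|κ| * δ) ^ n₂ * b ^ (-τ * n₂)) * |M| := by
        refine mul_le_mul ?_ (hy.trans (le_abs_self M)) (abs_nonneg y) (by positivity)
        exact mul_le_mul (pow_abs_le_of_abs_le_div_rpow hδ ha₀ h₁ n₁)
          (pow_abs_le_of_abs_le_div_rpow hδ hb₀ h₂ n₂) (by positivity) (by positivity)
    _ = |M| * (|κ| * δ) ^ (n₁ + n₂) * (a ^ (-(τ * n₁)) * b ^ (-(τ * n₂))) := by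
        rw [pow_add, neg_mul, neg_mul]; ring
    _ ≤ _ := by rw [mul_assoc _ _ ((a ^ 4)⁻¹ + _)]; gcongr

section SphereExp

variable {E F : Type*} [NormedAddCommGroup E] [InnerProductSpace ℝ E]
  [NormedAddCommGroup F] [InnerProductSpace ℝ F]

def sphericalCap (ξ : E) (r : ℝ) : Set E := {z | ‖z‖ = 1 ∧ arccos ⟪z, ξ⟫ ≤ r}

/-- The exponential map of the unit sphere at `ξ`, the tangent space `ξᗮ` being parametrized by
the isometry `T`. -/
noncomputable def sphereExp (ξ : E) (T : F →ₗᵢ[ℝ] E) (v : F) : E :=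
  cos ‖v‖ • ξ + sinc ‖v‖ • T v

lemma sphereExp_lipschitzOnWith {ξ : E} (hξ : ‖ξ‖ = 1) (T : F →ₗᵢ[ℝ] E) :
    LipschitzOnWith 6 (sphereExp ξ T) (closedBall 0 π) := by
  refine LipschitzOnWith.of_dist_le_mul fun v _ w hw => ?_
  rw [mem_closedBall_zero_iff] at hw
  have hcos : |cos ‖v‖ - cos ‖w‖| ≤ ‖v - w‖ :=
    (abs_cos_sub_cos_le _ _).trans (abs_norm_sub_norm_le v w)
  have hsinc : |sinc ‖v‖ - sinc ‖w‖| ≤ ‖v - w‖ :=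
    (abs_sinc_sub_sinc_le _ _).trans (abs_norm_sub_norm_le v w)
  have hdiff : sphereExp ξ T v - sphereExp ξ T w = (cos ‖v‖ - cos ‖w‖) • ξ +
      sinc ‖v‖ • T (v - w) + (sinc ‖v‖ - sinc ‖w‖) • T w := by
    simp only [sphereExp, map_sub]; module
  rw [dist_eq_norm, dist_eq_norm, hdiff]
  refine (norm_add₃_le ..).trans ?_
  simp only [norm_smul, Real.norm_eq_abs, hξ, T.norm_map]
  have := abs_sinc_le_one ‖v‖
  calc |cos ‖v‖ - cos ‖w‖| * 1 + |sinc ‖v‖| * ‖v - w‖ + |sinc ‖v‖ - sinc ‖w‖| * ‖w‖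
      ≤ ‖v - w‖ * 1 + 1 * ‖v - w‖ + ‖v - w‖ * π := by gcongr
    _ ≤ 6 * ‖v - w‖ := by nlinarith [pi_le_four, norm_nonneg (v - w)]

lemma exists_sphereExp_eq [Nontrivial F] {ξ z : E} (hξ : ‖ξ‖ = 1) {T : F →ₗᵢ[ℝ] E}
    (hT : Set.range T = (ℝ ∙ ξ)ᗮ) (hz : ‖z‖ = 1) :
    ∃ v, ‖v‖ = arccos ⟪z, ξ⟫ ∧ sphereExp ξ T v = z := by
  set c := ⟪z, ξ⟫
  set θ := arccos c
  have hc : |c| ≤ 1 := by simpa [hz, hξ] using abs_real_inner_le_norm z ξ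
  set w := z - c • ξ
  have hw_orth : w ∈ (ℝ ∙ ξ)ᗮ := by
    rw [Submodule.mem_orthogonal_singleton_iff_inner_right, inner_sub_right, real_inner_smul_right,
      real_inner_self_eq_norm_sq, hξ, real_inner_comm]
    ring
  have hw_norm : ‖w‖ = sin θ := by
    have hξξ : ⟪ξ, ξ⟫ = 1 := by rw [real_inner_self_eq_norm_sq, hξ, one_pow]
    have hzz : ⟪z, z⟫ = 1 := by rw [real_inner_self_eq_norm_sq, hz, one_pow]
    rw [sin_arccos, ← sqrt_sq (norm_nonneg w), ← real_inner_self_eq_norm_sq]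
    congr 1
    simp only [w, inner_sub_left, inner_sub_right, real_inner_smul_left, real_inner_smul_right,
      hξξ, hzz, real_inner_comm z ξ]
    ring
  suffices h : ∃ v, ‖v‖ = θ ∧ sinc θ • T v = w by
    obtain ⟨v, hv, hvw⟩ := h
    refine ⟨v, hv, ?_⟩
    rw [sphereExp, hv, hvw, cos_arccos (abs_le.mp hc).1 (abs_le.mp hc).2]
    exact add_sub_cancel _ _
  obtain ⟨u, hu⟩ : w ∈ Set.range T := hT ▸ hw_orth
  rcases eq_or_ne w 0 with hw0 | hw0
  · -- `z = ±ξ`: any `v` of length `θ` works, since `θ * sinc θ = sin θ = 0`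
    obtain ⟨v, hv⟩ : ∃ v : F, ‖v‖ = θ := exists_norm_eq F (arccos_nonneg c)
    refine ⟨v, hv, ?_⟩
    have hθ : θ * sinc θ = 0 := by rw [mul_sinc, ← hw_norm, hw0, norm_zero]
    rw [hw0, ← norm_eq_zero, norm_smul, T.norm_map, hv]
    rcases mul_eq_zero.mp hθ with h | h <;> simp [h]
  · have hw_pos : 0 < ‖w‖ := norm_pos_iff.mpr hw0
    have hu_norm : ‖u‖ = ‖w‖ := by rw [← hu, T.norm_map]
    refine ⟨(θ / ‖w‖) • u, ?_, ?_⟩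
    · rw [norm_smul, norm_of_nonneg (div_nonneg (arccos_nonneg c) hw_pos.le), hu_norm,
        div_mul_cancel₀ _ hw_pos.ne']
    · rw [T.map_smul, hu, smul_smul, mul_div_assoc', mul_comm, mul_sinc, ← hw_norm,
        div_self hw_pos.ne', one_smul]

lemma sphericalCap_subset_image_sphereExp [Nontrivial F] {ξ : E} (hξ : ‖ξ‖ = 1)
    {T : F →ₗᵢ[ℝ] E} (hT : Set.range T = (ℝ ∙ ξ)ᗮ) (r : ℝ) :
    sphericalCap ξ r ⊆ sphereExp ξ T '' closedBall 0 (min r π) := by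
  rintro z ⟨hz, hzr⟩
  obtain ⟨v, hv, rfl⟩ := exists_sphereExp_eq hξ hT hz
  exact ⟨v, by rw [mem_closedBall_zero_iff, hv]; exact le_min hzr (arccos_le_pi _), rfl⟩

lemma hausdorffMeasure_sphericalCap_le [MeasurableSpace E] [BorelSpace E] [MeasurableSpace F]
    [BorelSpace F] [Nontrivial F] {d : ℝ} (hd : 0 ≤ d) {ξ : E} (hξ : ‖ξ‖ = 1)
    {T : F →ₗᵢ[ℝ] E} (hT : Set.range T = (ℝ ∙ ξ)ᗮ) (r : ℝ) :
    μH[d] (sphericalCap ξ r) ≤ 6 ^ d * μH[d] (closedBall (0 : F) (min r π)) :=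
  (measure_mono (sphericalCap_subset_image_sphereExp hξ hT r)).trans <|
    ((sphereExp_lipschitzOnWith hξ T).mono
      (closedBall_subset_closedBall (min_le_right r π))).hausdorffMeasure_image_le hd

end SphereExp

lemma exists_linearIsometry_range_eq_orthogonal {E : Type*} [NormedAddCommGroup E]
    [InnerProductSpace ℝ E] {q : ℕ} (hE : finrank ℝ E = q + 1) {ξ : E} (hξ : ξ ≠ 0) :
    ∃ T : EuclideanSpace ℝ (Fin q) →ₗᵢ[ℝ] E, Set.range T = (ℝ ∙ ξ)ᗮ := by
  have : Fact (finrank ℝ E = q + 1) := ⟨hE⟩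
  refine ⟨(ℝ ∙ ξ)ᗮ.subtypeₗᵢ.comp
    (OrthonormalBasis.fromOrthogonalSpanSingleton q hξ).repr.symm.toLinearIsometry, ?_⟩
  simp [Set.range_comp]

lemma lintegral_inv_one_add_mul_pow_four_le {X : Type*} [MeasurableSpace X] {μ : Measure X}
    {θ : X → ℝ} (hθ : Measurable θ) (hθ0 : ∀ x, 0 ≤ θ x) {c : ℝ≥0∞}
    (hc : ∀ r, 0 ≤ r → μ {x | θ x ≤ r} ≤ c * ENNReal.ofReal (r ^ 2)) {δ : ℝ} (hδ : 0 < δ) :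
    ∫⁻ x, ENNReal.ofReal ((1 + δ * θ x) ^ 4)⁻¹ ∂μ ≤
      c * ENNReal.ofReal (π ^ 2 / 6) * ENNReal.ofReal (δ ^ 2)⁻¹ := by
  set shell : ℕ → Set X := fun k => {x | ⌊δ * θ x⌋₊ = k}
  have hshell : ∀ k, ∫⁻ x in shell k, ENNReal.ofReal ((1 + δ * θ x) ^ 4)⁻¹ ∂μ ≤
      c * ENNReal.ofReal (δ ^ 2)⁻¹ * ENNReal.ofReal (1 / ((k : ℝ) + 1) ^ 2) := by
    intro k
    calc ∫⁻ x in shell k, ENNReal.ofReal ((1 + δ * θ x) ^ 4)⁻¹ ∂μ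
        ≤ ∫⁻ _ in shell k, ENNReal.ofReal ((1 + (k : ℝ)) ^ 4)⁻¹ ∂μ := by
          refine setLIntegral_mono' ((hθ.const_mul δ).nat_floor (measurableSet_singleton k))
            fun x hx => ENNReal.ofReal_le_ofReal ?_
          have : (k : ℝ) ≤ δ * θ x := hx ▸ Nat.floor_le (mul_nonneg hδ.le (hθ0 x))
          gcongr
      _ ≤ ENNReal.ofReal ((1 + (k : ℝ)) ^ 4)⁻¹ * (c * ENNReal.ofReal (((k + 1) / δ) ^ 2)) := by
          rw [setLIntegral_const]
          gcongr
          refine (measure_mono fun x (hx : ⌊δ * θ x⌋₊ = k) => ?_).trans (hc _ (by positivity))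
          have := hx ▸ Nat.lt_floor_add_one (δ * θ x)
          show θ x ≤ (k + 1) / δ
          rw [le_div_iff₀ hδ]
          linarith
      _ = c * ENNReal.ofReal (δ ^ 2)⁻¹ * ENNReal.ofReal (1 / ((k : ℝ) + 1) ^ 2) := by
          rw [mul_left_comm, ← ENNReal.ofReal_mul (by positivity), mul_assoc,
            ← ENNReal.ofReal_mul (by positivity)]
          congr 2
          field_simp
          ring
  have hcover : ⋃ k, shell k = Set.univ := Set.iUnion_eq_univ_iff.mpr fun x => ⟨_, rfl⟩
  have hzeta : HasSum (fun k : ℕ => 1 / ((k : ℝ) + 1) ^ 2) (π ^ 2 / 6) := by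
    simpa using (hasSum_nat_add_iff' 1).mpr hasSum_zeta_two
  calc ∫⁻ x, ENNReal.ofReal ((1 + δ * θ x) ^ 4)⁻¹ ∂μ
      = ∫⁻ x in ⋃ k, shell k, ENNReal.ofReal ((1 + δ * θ x) ^ 4)⁻¹ ∂μ := by
        rw [hcover, Measure.restrict_univ]
    _ ≤ ∑' k, ∫⁻ x in shell k, ENNReal.ofReal ((1 + δ * θ x) ^ 4)⁻¹ ∂μ := lintegral_iUnion_le _ _
    _ ≤ ∑' k : ℕ, c * ENNReal.ofReal (δ ^ 2)⁻¹ * ENNReal.ofReal (1 / ((k : ℝ) + 1) ^ 2) :=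
        ENNReal.tsum_le_tsum hshell
    _ = c * ENNReal.ofReal (π ^ 2 / 6) * ENNReal.ofReal (δ ^ 2)⁻¹ := by
        rw [ENNReal.tsum_mul_left, ← ENNReal.ofReal_tsum_of_nonneg (fun k => by positivity)
          hzeta.summable, hzeta.tsum_eq]
        ring

section Sphere

variable {E : Type*} [NormedAddCommGroup E] [InnerProductSpace ℝ E] [MeasurableSpace E]
  [BorelSpace E] {q : ℕ}

lemma exists_hausdorffMeasure_sphericalCap_le_sq (hq : 2 ≤ q) (hE : finrank ℝ E = q + 1) :
    ∃ c : ℝ≥0∞, c ≠ ∞ ∧ ∀ ξ : E, ‖ξ‖ = 1 → ∀ r : ℝ, 0 ≤ r →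
      μH[q] (sphericalCap ξ r) ≤ c * ENNReal.ofReal (r ^ 2) := by
  set μ : Measure (EuclideanSpace ℝ (Fin q)) := μH[q]
  refine ⟨6 ^ (q : ℝ) * μ (ball 0 1) * ENNReal.ofReal (π ^ (q - 2)), by finiteness,
    fun ξ hξ r hr => ?_⟩
  have : NeZero q := ⟨by omega⟩
  obtain ⟨T, hT⟩ :=
    exists_linearIsometry_range_eq_orthogonal hE (norm_ne_zero_iff.mp (hξ ▸ one_ne_zero))
  have hρ : 0 ≤ min r π := le_min hr pi_nonneg
  have hpow : min r π ^ q ≤ π ^ (q - 2) * r ^ 2 := by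
    calc min r π ^ q = min r π ^ (q - 2) * min r π ^ 2 := by rw [← pow_add, Nat.sub_add_cancel hq]
      _ ≤ π ^ (q - 2) * r ^ 2 := by gcongr; exacts [min_le_right _ _, min_le_left _ _]
  calc μH[q] (sphericalCap ξ r) ≤ 6 ^ (q : ℝ) * μ (closedBall 0 (min r π)) :=
        hausdorffMeasure_sphericalCap_le q.cast_nonneg hξ hT r
    _ = 6 ^ (q : ℝ) * μ (ball 0 1) * ENNReal.ofReal (min r π ^ q) := by
        rw [Measure.addHaar_closedBall μ 0 hρ, finrank_euclideanSpace_fin]; ring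
    _ ≤ 6 ^ (q : ℝ) * μ (ball 0 1) * ENNReal.ofReal (π ^ (q - 2) * r ^ 2) := by gcongr
    _ = _ := by rw [ENNReal.ofReal_mul (by positivity)]; ring

lemma exists_lintegral_sphere_inv_one_add_mul_arccos_pow_four_le (hq : 2 ≤ q)
    (hE : finrank ℝ E = q + 1) :
    ∃ c : ℝ≥0∞, c ≠ ∞ ∧ ∀ ξ : E, ‖ξ‖ = 1 → ∀ δ : ℝ, 0 < δ →
      ∫⁻ z in sphere 0 1, ENNReal.ofReal ((1 + δ * arccos ⟪z, ξ⟫) ^ 4)⁻¹ ∂μH[q] ≤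
        c * ENNReal.ofReal (δ ^ 2)⁻¹ := by
  obtain ⟨c, hc, hcap⟩ := exists_hausdorffMeasure_sphericalCap_le_sq hq hE
  refine ⟨c * ENNReal.ofReal (π ^ 2 / 6), by finiteness, fun ξ hξ δ hδ => ?_⟩
  refine lintegral_inv_one_add_mul_pow_four_le (by fun_prop) (fun _ => arccos_nonneg _)
    (fun r hr => ?_) hδ
  rw [Measure.restrict_apply' isClosed_sphere.measurableSet]
  convert hcap ξ hξ r hr using 2
  ext z
  simp [sphericalCap, and_comm]

theorem integral_sphere_localized_product_le {μ : Measure E} {c : ℝ≥0∞} (hc : c ≠ ∞)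
    {δ τ κ M : ℝ} (hδ : 0 < δ) (hτ : 2 ≤ τ) {n₁ n₂ : ℕ} (hn₁ : 2 ≤ n₁) (hn₂ : 2 ≤ n₂)
    (hdecay : ∀ ξ : E, ‖ξ‖ = 1 →
      ∫⁻ z in sphere 0 1, ENNReal.ofReal ((1 + δ * arccos ⟪z, ξ⟫) ^ 4)⁻¹ ∂μ ≤
        c * ENNReal.ofReal (δ ^ 2)⁻¹)
    {ξ₁ ξ₂ : E} (hξ₁ : ‖ξ₁‖ = 1) (hξ₂ : ‖ξ₂‖ = 1) {ψ₁ ψ₂ f : E → ℝ}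
    (hf : ∀ z ∈ sphere (0 : E) 1, |f z| ≤ M)
    (h₁ : ∀ z ∈ sphere (0 : E) 1, |ψ₁ z| ≤ κ * δ / (1 + δ * arccos ⟪z, ξ₁⟫) ^ τ)
    (h₂ : ∀ z ∈ sphere (0 : E) 1, |ψ₂ z| ≤ κ * δ / (1 + δ * arccos ⟪z, ξ₂⟫) ^ τ) :
    ∫ z in sphere (0 : E) 1, |ψ₁ z| ^ n₁ * |ψ₂ z| ^ n₂ * f z ∂μ ≤
      |M| * (|κ| * δ) ^ (n₁ + n₂) * ((1 + δ * arccos ⟪ξ₁, ξ₂⟫) / 2) ^ (-((min n₁ n₂ : ℝ) * τ)) *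
        (2 * c.toReal * (δ ^ 2)⁻¹) := by
  set D := 1 + δ * arccos ⟪ξ₁, ξ₂⟫
  have hD : 0 < D := one_pos.trans_le (one_le_one_add_mul_arccos hδ.le _)
  set A := |M| * (|κ| * δ) ^ (n₁ + n₂) * (D / 2) ^ (-((min n₁ n₂ : ℝ) * τ))
  have hA : 0 ≤ A := by positivity
  have hpointwise : ∀ z ∈ sphere (0 : E) 1, ENNReal.ofReal ‖|ψ₁ z| ^ n₁ * |ψ₂ z| ^ n₂ * f z‖ ≤
      ENNReal.ofReal A * (ENNReal.ofReal ((1 + δ * arccos ⟪z, ξ₁⟫) ^ 4)⁻¹ +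
        ENNReal.ofReal ((1 + δ * arccos ⟪z, ξ₂⟫) ^ 4)⁻¹) := by
    intro z hz
    have hDz : D ≤ (1 + δ * arccos ⟪z, ξ₁⟫) + (1 + δ * arccos ⟪z, ξ₂⟫) := by
      have := arccos_inner_le_add hξ₁ (mem_sphere_zero_iff_norm.mp hz) hξ₂
      rw [real_inner_comm z ξ₁] at this
      nlinarith
    rw [← ENNReal.ofReal_add (by positivity) (by positivity), ← ENNReal.ofReal_mul hA]
    refine ENNReal.ofReal_le_ofReal ?_
    simpa only [norm_mul, norm_pow, norm_abs_eq_norm, Real.norm_eq_abs] using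
      abs_pow_mul_abs_pow_mul_abs_le hδ.le (one_le_one_add_mul_arccos hδ.le _)
        (one_le_one_add_mul_arccos hδ.le _) hD hDz hτ hn₁ hn₂ (h₁ z hz) (h₂ z hz) (hf z hz)
  refine (le_norm_self _).trans <| (norm_integral_le_lintegral_norm _).trans <|
    ENNReal.toReal_le_of_le_ofReal (by positivity) ?_
  calc _ ≤ ∫⁻ z in sphere (0 : E) 1, ENNReal.ofReal A *
        (ENNReal.ofReal ((1 + δ * arccos ⟪z, ξ₁⟫) ^ 4)⁻¹ +
          ENNReal.ofReal ((1 + δ * arccos ⟪z, ξ₂⟫) ^ 4)⁻¹) ∂μ :=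
        setLIntegral_mono' isClosed_sphere.measurableSet hpointwise
    _ = ENNReal.ofReal A *
        (∫⁻ z in sphere (0 : E) 1, ENNReal.ofReal ((1 + δ * arccos ⟪z, ξ₁⟫) ^ 4)⁻¹ ∂μ +
          ∫⁻ z in sphere (0 : E) 1, ENNReal.ofReal ((1 + δ * arccos ⟪z, ξ₂⟫) ^ 4)⁻¹ ∂μ) := by
        rw [lintegral_const_mul' _ _ ENNReal.ofReal_ne_top, lintegral_add_left (by fun_prop)]
    _ ≤ ENNReal.ofReal A * (c * ENNReal.ofReal (δ ^ 2)⁻¹ + c * ENNReal.ofReal (δ ^ 2)⁻¹) := by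
        gcongr
        exacts [hdecay ξ₁ hξ₁, hdecay ξ₂ hξ₂]
    _ = ENNReal.ofReal (A * (2 * c.toReal * (δ ^ 2)⁻¹)) := by
        rw [ENNReal.ofReal_mul hA]
        congr 1
        rw [ENNReal.ofReal_mul (by positivity), ENNReal.ofReal_mul zero_le_two,
          ENNReal.ofReal_toReal hc, ENNReal.ofReal_ofNat]
        ring

theorem exists_integral_sphere_localized_product_le (hq : 2 ≤ q) (hE : finrank ℝ E = q + 1)
    {τ κ M : ℝ} (hτ : 2 ≤ τ) {n₁ n₂ : ℕ} (hn₁ : 2 ≤ n₁) (hn₂ : 2 ≤ n₂) :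
    ∃ K : ℝ, 0 ≤ K ∧ ∀ δ : ℝ, 0 < δ → ∀ ξ₁ ξ₂ : E, ‖ξ₁‖ = 1 → ‖ξ₂‖ = 1 →
      ∀ ψ₁ ψ₂ f : E → ℝ, (∀ z ∈ sphere (0 : E) 1, |f z| ≤ M) →
      (∀ z ∈ sphere (0 : E) 1, |ψ₁ z| ≤ κ * δ / (1 + δ * arccos ⟪z, ξ₁⟫) ^ τ) →
      (∀ z ∈ sphere (0 : E) 1, |ψ₂ z| ≤ κ * δ / (1 + δ * arccos ⟪z, ξ₂⟫) ^ τ) →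
      ∫ z in sphere (0 : E) 1, |ψ₁ z| ^ n₁ * |ψ₂ z| ^ n₂ * f z ∂μH[q] ≤
        K * δ ^ (n₁ + n₂ - 2) * (1 + δ * arccos ⟪ξ₁, ξ₂⟫) ^ (-(min n₁ n₂ : ℝ) * τ) := by
  obtain ⟨c, hc, hdecay⟩ := exists_lintegral_sphere_inv_one_add_mul_arccos_pow_four_le hq hE
  refine ⟨|M| * |κ| ^ (n₁ + n₂) * 2 ^ ((min n₁ n₂ : ℝ) * τ) * (2 * c.toReal), by positivity,
    fun δ hδ ξ₁ ξ₂ hξ₁ hξ₂ ψ₁ ψ₂ f hf h₁ h₂ => ?_⟩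
  refine (integral_sphere_localized_product_le hc hδ hτ hn₁ hn₂ (hdecay · · δ hδ) hξ₁ hξ₂
    hf h₁ h₂).trans_eq ?_
  have hD : 0 ≤ 1 + δ * arccos ⟪ξ₁, ξ₂⟫ := zero_le_one.trans (one_le_one_add_mul_arccos hδ.le _)
  rw [div_rpow hD zero_le_two, rpow_neg zero_le_two, div_inv_eq_mul, neg_mul,
    pow_sub₀ δ hδ.ne' (by omega), mul_pow]
  ring

end Sphere

theorem localized_product_integral_bound_general
    (q : ℕ) (hq : 2 ≤ q) (B τ κ M : ℝ) (hB : 1 < B) (hτ : 2 ≤ τ)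
    (n₁ n₂ : ℕ) (hn₁ : 2 ≤ n₁) (hn₂ : 2 ≤ n₂) :
    ∃ C > (0 : ℝ), ∀ (j : ℕ) (ξ₁ ξ₂ : EuclideanSpace ℝ (Fin (q + 1))),
      ξ₁ ∈ Metric.sphere (0 : EuclideanSpace ℝ (Fin (q + 1))) 1 →
      ξ₂ ∈ Metric.sphere (0 : EuclideanSpace ℝ (Fin (q + 1))) 1 →
      ∀ ψ₁ ψ₂ f : EuclideanSpace ℝ (Fin (q + 1)) → ℝ,
      Measurable ψ₁ → Measurable ψ₂ → Measurable f →
      (∀ z ∈ Metric.sphere (0 : EuclideanSpace ℝ (Fin (q + 1))) 1,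
        0 ≤ f z ∧ f z ≤ M) →
      (∀ z ∈ Metric.sphere (0 : EuclideanSpace ℝ (Fin (q + 1))) 1,
        |ψ₁ z| ≤ κ * B ^ ((q : ℝ) * j / 2) /
          (1 + B ^ ((q : ℝ) * j / 2) * Real.arccos ⟪z, ξ₁⟫) ^ τ) →
      (∀ z ∈ Metric.sphere (0 : EuclideanSpace ℝ (Fin (q + 1))) 1,
        |ψ₂ z| ≤ κ * B ^ ((q : ℝ) * j / 2) /
          (1 + B ^ ((q : ℝ) * j / 2) * Real.arccos ⟪z, ξ₂⟫) ^ τ) →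
      ∫ z in (Metric.sphere (0 : EuclideanSpace ℝ (Fin (q + 1))) 1 : Set _),
          |ψ₁ z| ^ n₁ * |ψ₂ z| ^ n₂ * f z ∂(μH[(q : ℝ)])
        ≤ C * B ^ ((((n₁ : ℝ) + (n₂ : ℝ)) / 2 - 1) * q * j) *
          (1 + B ^ ((q : ℝ) * j / 2) * Real.arccos ⟪ξ₁, ξ₂⟫) ^
            (-(min n₁ n₂ : ℝ) * τ) := by
  obtain ⟨K, hK, hbound⟩ := exists_integral_sphere_localized_product_le (κ := κ) (M := M) hq
    (finrank_euclideanSpace_fin (𝕜 := ℝ)) hτ hn₁ hn₂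
  refine ⟨K + 1, by positivity, fun j ξ₁ ξ₂ hξ₁ hξ₂ ψ₁ ψ₂ f _ _ _ hf h₁ h₂ => ?_⟩
  set δ := B ^ ((q : ℝ) * j / 2)
  have hδ : 0 < δ := rpow_pos_of_pos (one_pos.trans hB) _
  have hδpow : δ ^ (n₁ + n₂ - 2) = B ^ ((((n₁ : ℝ) + (n₂ : ℝ)) / 2 - 1) * q * j) := by
    rw [← rpow_natCast, ← rpow_mul (one_pos.trans hB).le, Nat.cast_sub (by omega)]
    congr 1
    push_cast
    ring
  have hf' : ∀ z ∈ sphere (0 : EuclideanSpace ℝ (Fin (q + 1))) 1, |f z| ≤ M := fun z hz =>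
    (abs_of_nonneg (hf z hz).1).trans_le (hf z hz).2
  calc _ ≤ K * δ ^ (n₁ + n₂ - 2) * (1 + δ * arccos ⟪ξ₁, ξ₂⟫) ^ (-(min n₁ n₂ : ℝ) * τ) :=
        hbound δ hδ ξ₁ ξ₂ (mem_sphere_zero_iff_norm.mp hξ₁) (mem_sphere_zero_iff_norm.mp hξ₂)
          ψ₁ ψ₂ f hf' h₁ h₂
    _ ≤ _ := by
        have hD := one_le_one_add_mul_arccos hδ.le ⟪ξ₁, ξ₂⟫
        rw [hδpow]
        gcongr
        linarith

/-- **Integral bound for products of localized functions on the sphere.**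
If `ψ₁, ψ₂` satisfy needlet-type localization bounds at scale `j` around `ξ₁, ξ₂` on the
unit sphere `S^q ⊆ ℝ^{q+1}` (with geodesic distance `d(z,w) = arccos ⟪z,w⟫` and surface
measure `μH[q]`), and `0 ≤ f ≤ M`, then
`∫ |ψ₁|^{n₁} |ψ₂|^{n₂} f ≤ C B^{((n₁+n₂)/2-1) q j} (1 + B^{qj/2} d(ξ₁,ξ₂))^{-min(n₁,n₂) τ}`,
with `C` independent of `j`, `ξ₁`, `ξ₂`. -/
theorem localized_product_integral_bound
    (q : ℕ) (hq : 2 ≤ q) (B τ κ M : ℝ) (hB : 1 < B) (hτ : 2 ≤ τ) (hκ : 0 < κ)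
    (n₁ n₂ : ℕ) (hn₁ : 2 ≤ n₁) (hn₂ : 2 ≤ n₂) :
    ∃ C > (0 : ℝ), ∀ (j : ℕ) (ξ₁ ξ₂ : EuclideanSpace ℝ (Fin (q + 1))),
      ξ₁ ∈ Metric.sphere (0 : EuclideanSpace ℝ (Fin (q + 1))) 1 →
      ξ₂ ∈ Metric.sphere (0 : EuclideanSpace ℝ (Fin (q + 1))) 1 →
      ∀ ψ₁ ψ₂ f : EuclideanSpace ℝ (Fin (q + 1)) → ℝ,
      Measurable ψ₁ → Measurable ψ₂ → Measurable f →
      (∀ z ∈ Metric.sphere (0 : EuclideanSpace ℝ (Fin (q + 1))) 1,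
        0 ≤ f z ∧ f z ≤ M) →
      (∀ z ∈ Metric.sphere (0 : EuclideanSpace ℝ (Fin (q + 1))) 1,
        |ψ₁ z| ≤ κ * B ^ ((q : ℝ) * j / 2) /
          (1 + B ^ ((q : ℝ) * j / 2) * Real.arccos ⟪z, ξ₁⟫) ^ τ) →
      (∀ z ∈ Metric.sphere (0 : EuclideanSpace ℝ (Fin (q + 1))) 1,
        |ψ₂ z| ≤ κ * B ^ ((q : ℝ) * j / 2) /
          (1 + B ^ ((q : ℝ) * j / 2) * Real.arccos ⟪z, ξ₂⟫) ^ τ) →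
      ∫ z in (Metric.sphere (0 : EuclideanSpace ℝ (Fin (q + 1))) 1 : Set _),
          |ψ₁ z| ^ n₁ * |ψ₂ z| ^ n₂ * f z ∂(μH[(q : ℝ)])
        ≤ C * B ^ ((((n₁ : ℝ) + (n₂ : ℝ)) / 2 - 1) * q * j) *
          (1 + B ^ ((q : ℝ) * j / 2) * Real.arccos ⟪ξ₁, ξ₂⟫) ^
            (-(min n₁ n₂ : ℝ) * τ) :=
  localized_product_integral_bound_general q hq B τ κ M hB hτ n₁ n₂ hn₁ hn₂
end

section
/- Let q ≥ 2 be an integer, let S^q denote the unit sphere in ℝ^{q+1} equipped with its surface measure dz and geodesic distance d(z_1, z_2) = arccos⟨z_1, z_2⟩. Fix B > 1, an integer j ≥ 0, real numbers κ > 0 and τ > 2, and an integer n ≥ 1. Suppose g : S^q × S^q → ℝ is a measurable kernel satisfying |g(z_1, z_2)| ≤ κ B^{qj/2} / (1 + B^{qj/2} d(z_1, z_2))^τ for all z_1, z_2 ∈ S^q. Then there exists a constant C > 0, depending only on q, τ, κ, n (not on j), such that ∫_{S^q} ∫_{S^q} |g(z_1, z_2)|^n dz_1 dz_2 ≤ C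 · B^{qj(n/2 − 1)}. -/
/-!
Put `R = B^{qj/2}`. Since the chord `‖z₁ - z₂‖` is at most the arc `arccos ⟪z₁, z₂⟫`, the
hypothesis gives `|g z₁ z₂|^n ≤ κ^n R^n (1 + R ‖z₁ - z₂‖)^{-τn}`. Caps of radius `t ≤ 1/2` on `S^q`
are images of `q`-balls of radius `t` under the 2-Lipschitz inverse of the orthogonal projection
onto the tangent space, so they have measure `≲ t^q ≤ t^2` as `q ≥ 2`; as `S^q` has finite measure,
caps of any radius have measure `≲ t^2`. Summing over the dyadic balls `‖z - z₁‖ ≤ 2^k/R` then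
gives `∫ (1 + R ‖z - z₁‖)^{-s} dz ≲ R^{-2}` for `s = τn > 2`, whence the inner integral is
`≲ κ^n R^{n-2} = κ^n B^{qj(n/2-1)}`, uniformly in `z₁`.
-/

open MeasureTheory Metric Set Module
open scoped ENNReal RealInnerProductSpace

theorem abs_sqrt_one_sub_sq_sub_sqrt_one_sub_sq_le {u v : ℝ} (hu : |u| ≤ 1 / 2) (hv : |v| ≤ 1 / 2) :
    |√(1 - u ^ 2) - √(1 - v ^ 2)| ≤ |u - v| := by
  have hu2 : u ^ 2 ≤ 1 / 4 := by nlinarith [sq_abs u, abs_nonneg u]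
  have hv2 : v ^ 2 ≤ 1 / 4 := by nlinarith [sq_abs v, abs_nonneg v]
  have hA := Real.sq_sqrt (show 0 ≤ 1 - u ^ 2 by linarith)
  have hB := Real.sq_sqrt (show 0 ≤ 1 - v ^ 2 by linarith)
  have hA' : 1 / 2 ≤ √(1 - u ^ 2) := Real.le_sqrt_of_sq_le (by linarith)
  have hB' : 1 / 2 ≤ √(1 - v ^ 2) := Real.le_sqrt_of_sq_le (by linarith)
  -- the difference of the squares of the roots is `v² - u²`, and their sum is `≥ 1`
  have hprod : |√(1 - u ^ 2) - √(1 - v ^ 2)| * (√(1 - u ^ 2) + √(1 - v ^ 2)) =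
      |u - v| * |u + v| := by
    rw [← abs_of_pos (show 0 < √(1 - u ^ 2) + √(1 - v ^ 2) by linarith), ← abs_mul, ← abs_mul,
      ← abs_neg ((u - v) * (u + v))]
    congr 1; linear_combination hA - hB
  have huv : |u + v| ≤ 1 := (abs_add_le u v).trans (by linarith)
  nlinarith [abs_nonneg (√(1 - u ^ 2) - √(1 - v ^ 2)), abs_nonneg (u - v)]

theorem exists_le_two_pow_and_one_add_rpow_neg_le {s u : ℝ} (hs : 0 ≤ s) (hu : 0 ≤ u) :
    ∃ k : ℕ, u ≤ 2 ^ k ∧ (1 + u) ^ (-s) ≤ (2 ^ k / 2 : ℝ) ^ (-s) := by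
  obtain ⟨m, hle, hlt⟩ := exists_nat_pow_near (show 1 ≤ 1 + u by linarith) one_lt_two
  refine ⟨m + 1, by linarith, Real.rpow_le_rpow_of_nonpos (by positivity) ?_ (by linarith)⟩
  rw [pow_succ, mul_div_cancel_right₀ _ two_ne_zero]
  exact hle

theorem lintegral_one_add_mul_dist_rpow_neg_le {X : Type*} [PseudoMetricSpace X]
    [MeasurableSpace X] [OpensMeasurableSpace X] {μ : Measure X} {x : X} {c p s R : ℝ}
    (hc : 0 ≤ c) (hs : 0 ≤ s) (hps : p < s) (hR : 0 < R)
    (hμ : ∀ t > 0, μ (closedBall x t) ≤ ENNReal.ofReal (c * t ^ p)) :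
    ∫⁻ z, ENNReal.ofReal ((1 + R * dist z x) ^ (-s)) ∂μ ≤
      ENNReal.ofReal (2 ^ s * c / (1 - 2 ^ (p - s)) * R ^ (-p)) := by
  set r : ℝ := 2 ^ (p - s) with hr
  have hr0 : 0 ≤ r := by positivity
  have hr1 : r < 1 := Real.rpow_lt_one_of_one_lt_of_neg one_lt_two (by linarith)
  have hdom : ∀ z, ENNReal.ofReal ((1 + R * dist z x) ^ (-s)) ≤ ∑' k : ℕ,
      (closedBall x (2 ^ k / R)).indicator (fun _ ↦ ENNReal.ofReal ((2 ^ k / 2 : ℝ) ^ (-s))) z := by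
    intro z
    obtain ⟨k, hk, hle⟩ :=
      exists_le_two_pow_and_one_add_rpow_neg_le hs (mul_nonneg hR.le (dist_nonneg (x := z)))
    refine le_trans ?_ (ENNReal.le_tsum k)
    rw [indicator_of_mem (by rwa [mem_closedBall, le_div_iff₀ hR, mul_comm])]
    exact ENNReal.ofReal_le_ofReal hle
  have hterm : ∀ k : ℕ, ENNReal.ofReal ((2 ^ k / 2 : ℝ) ^ (-s)) * μ (closedBall x (2 ^ k / R)) ≤
      ENNReal.ofReal (2 ^ s * c * R ^ (-p) * r ^ k) := by
    intro k
    calc _ ≤ ENNReal.ofReal ((2 ^ k / 2 : ℝ) ^ (-s)) * ENNReal.ofReal (c * (2 ^ k / R) ^ p) := by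
          gcongr; exact hμ _ (by positivity)
      _ = _ := by
          rw [← ENNReal.ofReal_mul (by positivity), hr, Real.rpow_pow_comm zero_le_two,
            Real.div_rpow (by positivity) zero_le_two, Real.div_rpow (by positivity) hR.le,
            Real.rpow_sub (by positivity), Real.rpow_neg zero_le_two, Real.rpow_neg hR.le,
            Real.rpow_neg (by positivity)]
          congr 1
          field_simp
  calc ∫⁻ z, ENNReal.ofReal ((1 + R * dist z x) ^ (-s)) ∂μ
      ≤ ∫⁻ z, ∑' k : ℕ, (closedBall x (2 ^ k / R)).indicator
          (fun _ ↦ ENNReal.ofReal ((2 ^ k / 2 : ℝ) ^ (-s))) z ∂μ := lintegral_mono hdom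
    _ = ∑' k : ℕ, ENNReal.ofReal ((2 ^ k / 2 : ℝ) ^ (-s)) * μ (closedBall x (2 ^ k / R)) := by
          rw [lintegral_tsum fun k ↦
            (measurable_const.indicator measurableSet_closedBall).aemeasurable]
          simp only [lintegral_indicator_const measurableSet_closedBall]
    _ ≤ ∑' k : ℕ, ENNReal.ofReal (2 ^ s * c * R ^ (-p) * r ^ k) := ENNReal.tsum_le_tsum hterm
    _ = ENNReal.ofReal (2 ^ s * c / (1 - r) * R ^ (-p)) := by
          rw [← ENNReal.ofReal_tsum_of_nonneg (fun k ↦ by positivity)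
            ((summable_geometric_of_lt_one hr0 hr1).mul_left _), tsum_mul_left,
            tsum_geometric_of_lt_one hr0 hr1]
          ring_nf

theorem norm_integral_abs_pow_le {X : Type*} [PseudoMetricSpace X] [MeasurableSpace X]
    [OpensMeasurableSpace X] {μ : Measure X} {x : X} {f : X → ℝ} {c p τ κ R : ℝ} {n : ℕ}
    (hc : 0 ≤ c) (hτ : 0 ≤ τ) (hp : p < τ * n) (hκ : 0 ≤ κ) (hR : 0 < R)
    (hμ : ∀ t > 0, μ (closedBall x t) ≤ ENNReal.ofReal (c * t ^ p))
    (hf : ∀ᵐ z ∂μ, |f z| ≤ κ * R * (1 + R * dist z x) ^ (-τ)) :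
    ‖∫ z, |f z| ^ n ∂μ‖ ≤ κ ^ n * (2 ^ (τ * n) * c / (1 - 2 ^ (p - τ * n))) * R ^ (n - p) := by
  have hr1 : (2 : ℝ) ^ (p - τ * n) < 1 := Real.rpow_lt_one_of_one_lt_of_neg one_lt_two (by linarith)
  have hC : 0 ≤ 2 ^ (τ * n) * c / (1 - 2 ^ (p - τ * n)) :=
    div_nonneg (by positivity) (by linarith)
  refine (norm_integral_le_lintegral_norm _).trans
    (ENNReal.toReal_le_of_le_ofReal (by positivity) ?_)
  calc ∫⁻ z, ENNReal.ofReal ‖|f z| ^ n‖ ∂μ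
      ≤ ∫⁻ z, ENNReal.ofReal ((κ * R) ^ n) *
          ENNReal.ofReal ((1 + R * dist z x) ^ (-(τ * n))) ∂μ := by
        refine lintegral_mono_ae (hf.mono fun z hz ↦ ?_)
        rw [← ENNReal.ofReal_mul (by positivity), Real.norm_of_nonneg (by positivity),
          neg_mul_eq_neg_mul, Real.rpow_mul (by positivity), Real.rpow_natCast, ← mul_pow]
        exact ENNReal.ofReal_le_ofReal (pow_le_pow_left₀ (abs_nonneg _) hz n)
    _ = ENNReal.ofReal ((κ * R) ^ n) *
          ∫⁻ z, ENNReal.ofReal ((1 + R * dist z x) ^ (-(τ * n))) ∂μ :=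
        lintegral_const_mul' _ _ ENNReal.ofReal_ne_top
    _ ≤ ENNReal.ofReal ((κ * R) ^ n) *
          ENNReal.ofReal (2 ^ (τ * n) * c / (1 - 2 ^ (p - τ * n)) * R ^ (-p)) := by
        gcongr
        exact lintegral_one_add_mul_dist_rpow_neg_le hc (by positivity) hp hR hμ
    _ = ENNReal.ofReal (κ ^ n * (2 ^ (τ * n) * c / (1 - 2 ^ (p - τ * n))) * R ^ (n - p)) := by
        rw [← ENNReal.ofReal_mul (by positivity), Real.rpow_sub hR, Real.rpow_neg hR.le,
          Real.rpow_natCast]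
        ring_nf

section Sphere

variable {E : Type*} [NormedAddCommGroup E] [InnerProductSpace ℝ E]

theorem dist_le_arccos_inner {x y : E} (hx : ‖x‖ = 1) (hy : ‖y‖ = 1) :
    dist x y ≤ Real.arccos ⟪x, y⟫ := by
  have hinner : |⟪x, y⟫| ≤ 1 := by simpa [hx, hy] using abs_real_inner_le_norm x y
  have hcos : Real.cos (Real.arccos ⟪x, y⟫) = ⟪x, y⟫ :=
    Real.cos_arccos (abs_le.mp hinner).1 (abs_le.mp hinner).2
  have hdist : dist x y ^ 2 = 2 - 2 * ⟪x, y⟫ := by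
    rw [dist_eq_norm, norm_sub_sq_real, hx, hy]; ring
  have := Real.one_sub_sq_div_two_le_cos (x := Real.arccos ⟪x, y⟫)
  nlinarith [Real.arccos_nonneg ⟪x, y⟫, dist_nonneg (x := x) (y := y)]

theorem div_one_add_mul_arccos_inner_rpow_le {x y : E} (hx : ‖x‖ = 1) (hy : ‖y‖ = 1)
    {a R τ : ℝ} (ha : 0 ≤ a) (hR : 0 ≤ R) (hτ : 0 ≤ τ) :
    a / (1 + R * Real.arccos ⟪x, y⟫) ^ τ ≤ a * (1 + R * dist y x) ^ (-τ) := by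
  rw [Real.rpow_neg (by positivity), ← div_eq_mul_inv, dist_comm]
  gcongr
  exact dist_le_arccos_inner hx hy

/-- On `vᗮ`, the inverse of the orthogonal projection of the unit hemisphere around `v`. -/
noncomputable def capChart (v w : E) : E := √(1 - ‖w‖ ^ 2) • v + w

theorem lipschitzOnWith_capChart {v : E} (hv : ‖v‖ = 1) :
    LipschitzOnWith 2 (capChart v) (closedBall 0 (1 / 2)) := by
  refine LipschitzOnWith.of_dist_le_mul fun x hx y hy ↦ ?_
  rw [mem_closedBall_zero_iff] at hx hy
  have hsqrt : |√(1 - ‖x‖ ^ 2) - √(1 - ‖y‖ ^ 2)| ≤ dist x y :=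
    (abs_sqrt_one_sub_sq_sub_sqrt_one_sub_sq_le (by rwa [abs_norm]) (by rwa [abs_norm])).trans
      ((abs_norm_sub_norm_le x y).trans_eq (dist_eq_norm x y).symm)
  calc dist (capChart v x) (capChart v y)
      = ‖(√(1 - ‖x‖ ^ 2) - √(1 - ‖y‖ ^ 2)) • v + (x - y)‖ := by
        rw [dist_eq_norm, capChart, capChart, sub_smul]; congr 1; abel
    _ ≤ |√(1 - ‖x‖ ^ 2) - √(1 - ‖y‖ ^ 2)| + dist x y := by
        grw [norm_add_le, norm_smul, hv, Real.norm_eq_abs, dist_eq_norm, mul_one]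
    _ ≤ (2 : NNReal) * dist x y := by push_cast; linarith

theorem sphere_inter_closedBall_subset_image_capChart {v : E} (hv : ‖v‖ = 1) {t : ℝ}
    (ht : t ≤ 1 / 2) :
    sphere 0 1 ∩ closedBall v t ⊆ capChart v '' ((ℝ ∙ v)ᗮ ∩ closedBall 0 t) := by
  rintro z ⟨hz, hzv⟩
  rw [mem_sphere_zero_iff_norm] at hz
  rw [mem_closedBall, dist_eq_norm] at hzv
  set a := ⟪v, z⟫
  have hdist : ‖z - v‖ ^ 2 = 2 - 2 * a := by
    rw [norm_sub_sq_real, hz, hv, real_inner_comm]; ring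
  have ha78 : 7 / 8 ≤ a := by nlinarith [norm_nonneg (z - v)]
  have hw : ‖z - a • v‖ ^ 2 = 1 - a ^ 2 := by
    rw [norm_sub_sq_real, hz, norm_smul, real_inner_smul_right, real_inner_comm, Real.norm_eq_abs,
      mul_pow, sq_abs, hv]
    ring
  refine ⟨z - a • v, ⟨?_, ?_⟩, ?_⟩
  · rw [SetLike.mem_coe, Submodule.mem_orthogonal_singleton_iff_inner_right, inner_sub_right,
      real_inner_smul_right, real_inner_self_eq_norm_sq, hv]
    ring
  · rw [mem_closedBall_zero_iff]
    nlinarith [norm_nonneg (z - a • v), norm_nonneg (z - v)]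
  · rw [capChart, hw, sub_sub_cancel, Real.sqrt_sq (by linarith)]
    abel

variable [MeasurableSpace E] [BorelSpace E]

theorem exists_hausdorffMeasure_sphere_inter_closedBall_le (q : ℕ) [Fact (finrank ℝ E = q + 1)] :
    ∃ c > 0, ∀ v ∈ sphere (0 : E) 1, ∀ t, 0 ≤ t → t ≤ 1 / 2 →
      μH[q] (sphere (0 : E) 1 ∩ closedBall v t) ≤ ENNReal.ofReal (c * t ^ q) := by
  let F := EuclideanSpace ℝ (Fin q)
  have : (μH[q] : Measure F).IsAddHaarMeasure := by
    have := isAddHaarMeasure_hausdorffMeasure (E := F)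
    rwa [finrank_euclideanSpace_fin] at this
  set m := μH[q] (ball (0 : F) 1)
  have hm : m ≠ ∞ := measure_ball_lt_top.ne
  have hm0 : 0 < m.toReal := ENNReal.toReal_pos (measure_ball_pos _ _ one_pos).ne' hm
  refine ⟨2 ^ q * m.toReal, by positivity, fun v hv t ht0 ht ↦ ?_⟩
  rw [mem_sphere_zero_iff_norm] at hv
  have hv0 : v ≠ 0 := norm_ne_zero_iff.mp (by rw [hv]; exact one_ne_zero)
  let e := (OrthonormalBasis.fromOrthogonalSpanSingleton (𝕜 := ℝ) q hv0).repr
  let ι : F →ₗᵢ[ℝ] E := (ℝ ∙ v)ᗮ.subtypeₗᵢ.comp e.symm.toLinearIsometry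
  have hι : ((ℝ ∙ v)ᗮ : Set E) ∩ closedBall 0 t ⊆ ι '' closedBall 0 t := by
    rintro w ⟨hw, hwt⟩
    refine ⟨e ⟨w, hw⟩, ?_, ?_⟩
    · simpa using hwt
    · simp [ι]
  have hιt : ι '' closedBall 0 t ⊆ closedBall 0 (1 / 2) := by
    rintro _ ⟨w, hw, rfl⟩
    simpa using (mem_closedBall_zero_iff.mp hw).trans ht
  calc μH[q] (sphere (0 : E) 1 ∩ closedBall v t)
      ≤ μH[q] (capChart v '' (ι '' closedBall 0 t)) :=
        measure_mono ((sphere_inter_closedBall_subset_image_capChart hv ht).trans (image_mono hι))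
    _ ≤ (2 : NNReal) ^ (q : ℝ) * μH[q] (ι '' closedBall 0 t) :=
        ((lipschitzOnWith_capChart hv).mono hιt).hausdorffMeasure_image_le (Nat.cast_nonneg q)
    _ = (2 : NNReal) ^ (q : ℝ) * μH[q] (closedBall (0 : F) t) := by
        rw [ι.isometry.hausdorffMeasure_image (Or.inl (Nat.cast_nonneg q))]
    _ = ENNReal.ofReal (2 ^ q * m.toReal * t ^ q) := by
        rw [Measure.addHaar_closedBall _ _ ht0, finrank_euclideanSpace_fin,
          ENNReal.ofReal_mul (by positivity), ENNReal.ofReal_mul (by positivity),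
          ENNReal.ofReal_toReal hm, ENNReal.ofReal_pow zero_le_two, ENNReal.rpow_natCast]
        norm_num
        ring

theorem hausdorffMeasure_sphere_lt_top (q : ℕ) [Fact (finrank ℝ E = q + 1)] :
    μH[q] (sphere (0 : E) 1) < ∞ := by
  have : FiniteDimensional ℝ E := .of_fact_finrank_eq_succ q
  obtain ⟨c, -, hcap⟩ := exists_hausdorffMeasure_sphere_inter_closedBall_le (E := E) q
  obtain ⟨s, hs, hcover⟩ := (isCompact_sphere (0 : E) 1).elim_nhds_subcover
    (fun z ↦ closedBall z (1 / 2)) fun z _ ↦ closedBall_mem_nhds z (by norm_num)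
  calc μH[q] (sphere (0 : E) 1)
      ≤ μH[q] (⋃ z ∈ s, sphere (0 : E) 1 ∩ closedBall z (1 / 2)) := by
        rw [← inter_iUnion₂]
        exact measure_mono (subset_inter subset_rfl hcover)
    _ ≤ ∑ z ∈ s, μH[q] (sphere (0 : E) 1 ∩ closedBall z (1 / 2)) := measure_biUnion_finset_le _ _
    _ < ∞ := ENNReal.sum_lt_top.mpr fun z hz ↦
        (hcap z (hs z hz) _ (by norm_num) le_rfl).trans_lt ENNReal.ofReal_lt_top

theorem exists_hausdorffMeasure_restrict_sphere_closedBall_le (q : ℕ) [Fact (finrank ℝ E = q + 1)]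
    {p : ℝ} (hp : 0 ≤ p) (hpq : p ≤ q) :
    ∃ c > 0, ∀ v ∈ sphere (0 : E) 1, ∀ t > 0,
      μH[q].restrict (sphere (0 : E) 1) (closedBall v t) ≤ ENNReal.ofReal (c * t ^ p) := by
  obtain ⟨c, hc, hcap⟩ := exists_hausdorffMeasure_sphere_inter_closedBall_le (E := E) q
  set M := μH[q].real (sphere (0 : E) 1)
  refine ⟨c + 2 ^ p * M, by positivity, fun v hv t ht ↦ ?_⟩
  rw [Measure.restrict_apply measurableSet_closedBall, inter_comm]
  rcases le_or_gt t (1 / 2) with ht2 | ht2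
  · refine (hcap v hv t ht.le ht2).trans (ENNReal.ofReal_le_ofReal ?_)
    have : t ^ q ≤ t ^ p := by
      rw [← Real.rpow_natCast]
      exact Real.rpow_le_rpow_of_exponent_ge ht (by linarith) hpq
    nlinarith [Real.rpow_nonneg ht.le p,
      mul_nonneg (Real.rpow_nonneg ht.le p) (by positivity : 0 ≤ 2 ^ p * M)]
  · have h2t : 1 ≤ (2 * t) ^ p := Real.one_le_rpow (by linarith) hp
    calc μH[q] (sphere (0 : E) 1 ∩ closedBall v t)
        ≤ μH[q] (sphere (0 : E) 1) := measure_mono inter_subset_left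
      _ = ENNReal.ofReal M := (ENNReal.ofReal_toReal (hausdorffMeasure_sphere_lt_top q).ne).symm
      _ ≤ ENNReal.ofReal ((c + 2 ^ p * M) * t ^ p) := by
        refine ENNReal.ofReal_le_ofReal ?_
        rw [Real.mul_rpow zero_le_two ht.le] at h2t
        nlinarith [Real.rpow_nonneg ht.le p,
          measureReal_nonneg (μ := μH[(q : ℝ)]) (s := sphere (0 : E) 1)]

end Sphere

/-- **Integral bound for powers of a localized kernel on the sphere.**
If a kernel `g` on `S^q × S^q` satisfies the needlet-type localization bound
`|g(z₁,z₂)| ≤ κ B^{qj/2} / (1 + B^{qj/2} d(z₁,z₂))^τ` with `τ > 2` (where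
`d(z₁,z₂) = arccos ⟪z₁,z₂⟫` is the geodesic distance and the sphere carries its surface
measure `μH[q]`), then `∬ |g(z₁,z₂)|^n dz₁ dz₂ ≤ C B^{qj(n/2-1)}` with `C` independent
of `j`. -/
theorem localized_kernel_power_integral_bound
    (q : ℕ) (hq : 2 ≤ q) (B τ κ : ℝ) (hB : 1 < B) (hτ : 2 < τ) (hκ : 0 < κ)
    (n : ℕ) (hn : 1 ≤ n) :
    ∃ C > (0 : ℝ), ∀ (j : ℕ)
      (g : EuclideanSpace ℝ (Fin (q + 1)) → EuclideanSpace ℝ (Fin (q + 1)) → ℝ),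
      Measurable (Function.uncurry g) →
      (∀ z₁ ∈ Metric.sphere (0 : EuclideanSpace ℝ (Fin (q + 1))) 1,
       ∀ z₂ ∈ Metric.sphere (0 : EuclideanSpace ℝ (Fin (q + 1))) 1,
        |g z₁ z₂| ≤ κ * B ^ ((q : ℝ) * j / 2) /
          (1 + B ^ ((q : ℝ) * j / 2) * Real.arccos ⟪z₁, z₂⟫) ^ τ) →
      ∫ z₁ in (Metric.sphere (0 : EuclideanSpace ℝ (Fin (q + 1))) 1 : Set _),
        (∫ z₂ in (Metric.sphere (0 : EuclideanSpace ℝ (Fin (q + 1))) 1 : Set _),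
          |g z₁ z₂| ^ n ∂(μH[(q : ℝ)])) ∂(μH[(q : ℝ)])
        ≤ C * B ^ ((q : ℝ) * j * ((n : ℝ) / 2 - 1)) := by
  have : Fact (finrank ℝ (EuclideanSpace ℝ (Fin (q + 1))) = q + 1) := ⟨finrank_euclideanSpace_fin⟩
  set S := sphere (0 : EuclideanSpace ℝ (Fin (q + 1))) 1
  have hτn : 2 < τ * n := by nlinarith [show (1 : ℝ) ≤ n by exact_mod_cast hn]
  obtain ⟨c, hc, hgrowth⟩ := exists_hausdorffMeasure_restrict_sphere_closedBall_le
    (E := EuclideanSpace ℝ (Fin (q + 1))) q zero_le_two (by exact_mod_cast hq)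
  set C₀ := 2 ^ (τ * n) * c / (1 - 2 ^ (2 - τ * n))
  have hC₀ : 0 < C₀ := div_pos (by positivity)
    (sub_pos.mpr (Real.rpow_lt_one_of_one_lt_of_neg one_lt_two (by linarith)))
  refine ⟨κ ^ n * C₀ * (μH[(q : ℝ)].real S + 1), by positivity, fun j g _ hg ↦ ?_⟩
  set R := B ^ ((q : ℝ) * j / 2)
  have hR : 0 < R := by positivity
  have hinner : ∀ z₁ ∈ S,
      ‖∫ z₂ in S, |g z₁ z₂| ^ n ∂μH[(q : ℝ)]‖ ≤ κ ^ n * C₀ * R ^ ((n : ℝ) - 2) :=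
    fun z₁ hz₁ ↦ norm_integral_abs_pow_le hc.le (by linarith) hτn hκ.le hR (hgrowth z₁ hz₁)
      (ae_restrict_of_forall_mem isClosed_sphere.measurableSet fun z₂ hz₂ ↦
        (hg z₁ hz₁ z₂ hz₂).trans (div_one_add_mul_arccos_inner_rpow_le
          (mem_sphere_zero_iff_norm.mp hz₁) (mem_sphere_zero_iff_norm.mp hz₂)
          (by positivity) hR.le (by linarith)))
  have hRpow : R ^ ((n : ℝ) - 2) = B ^ ((q : ℝ) * j * ((n : ℝ) / 2 - 1)) := by
    rw [← Real.rpow_mul (by linarith)]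
    ring_nf
  calc _ ≤ ‖∫ z₁ in S, ∫ z₂ in S, |g z₁ z₂| ^ n ∂μH[(q : ℝ)] ∂μH[(q : ℝ)]‖ := Real.le_norm_self _
    _ ≤ κ ^ n * C₀ * R ^ ((n : ℝ) - 2) * μH[(q : ℝ)].real S :=
        norm_setIntegral_le_of_norm_le_const (hausdorffMeasure_sphere_lt_top q) hinner
    _ ≤ κ ^ n * C₀ * (μH[(q : ℝ)].real S + 1) * B ^ ((q : ℝ) * j * ((n : ℝ) / 2 - 1)) := by
        rw [hRpow]
        nlinarith [show 0 ≤ κ ^ n * C₀ * B ^ ((q : ℝ) * j * ((n : ℝ) / 2 - 1)) by positivity]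
end
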